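/- arXiv:0709.2721 — 13 statements merged into one kernel-verified Lean document; each statement's English description precedes it below -/
import Mathlib

section
/- For every oligopoly pricing game there exists an efficient equilibrium. Concretely, let (r_i^*)_{i=1}^N be the socially optimal routing and λ* := min_{j} λ_j(r_j^*); then the pricing profile B_i(t) = λ*·t for every relay i, together with the routing (r_i^*), is an equilibrium, so the socially optimal routing is induced by an equilibrium. -/
open Finset MeasureTheory intervalIntegral Set

/-- Virtual-competitor cost function: the minimal total cost of splitting traffic `t`
among the relays other than `i`, given pricing functions `B`. -/
noncomputable def Bhat (N : ℕ) (B : Fin N → ℝ → ℝ) (i : Fin N) (t : ℝ) : ℝ :=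
  sInf {c : ℝ | ∃ g : Fin N → ℝ, (∀ j, 0 ≤ g j) ∧
    (∑ j ∈ Finset.univ.erase i, g j) = t ∧ c = ∑ j ∈ Finset.univ.erase i, B j (g j)}

/-- A routing of total rate `Rs` among `N` relays. -/
def IsRouting (N : ℕ) (Rs : ℝ) (f : Fin N → ℝ) : Prop :=
  (∀ i, 0 ≤ f i) ∧ (∑ i, f i) = Rs

/-- The network cost of a routing. -/
noncomputable def totalCost (N : ℕ) (lam : Fin N → ℝ → ℝ) (f : Fin N → ℝ) : ℝ :=
  ∑ i, ∫ r in (0:ℝ)..(f i), lam i r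

/-- The socially optimal routing: a routing of minimum cost. -/
def IsSociallyOptimal (N : ℕ) (Rs : ℝ) (lam : Fin N → ℝ → ℝ) (f : Fin N → ℝ) : Prop :=
  IsRouting N Rs f ∧ ∀ g, IsRouting N Rs g → totalCost N lam f ≤ totalCost N lam g

/-- An oligopoly pricing game: at least two relays, positive rate, and marginal cost
functions that are positive, continuous and strictly increasing on `[0, Rs]`. -/
def IsOligopoly (N : ℕ) (Rs : ℝ) (lam : Fin N → ℝ → ℝ) : Prop :=
  2 ≤ N ∧ 0 < Rs ∧ ∀ i,
    (∀ t ∈ Set.Icc (0:ℝ) Rs, 0 < lam i t) ∧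
    ContinuousOn (lam i) (Set.Icc 0 Rs) ∧
    StrictMonoOn (lam i) (Set.Icc 0 Rs)

/-- A pricing profile: each relay's pricing function is continuous, nondecreasing,
and vanishes at `0`. -/
def IsPricingProfile (N : ℕ) (Rs : ℝ) (B : Fin N → ℝ → ℝ) : Prop :=
  ∀ i, ContinuousOn (B i) (Set.Icc 0 Rs) ∧ MonotoneOn (B i) (Set.Icc 0 Rs) ∧ B i 0 = 0

/-- Equilibrium of the oligopoly pricing game. -/
def IsEquilibrium (N : ℕ) (Rs : ℝ) (lam B : Fin N → ℝ → ℝ) (f : Fin N → ℝ) : Prop :=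
  IsPricingProfile N Rs B ∧ IsRouting N Rs f ∧
  (∀ g, IsRouting N Rs g → (∑ i, B i (f i)) ≤ ∑ i, B i (g i)) ∧
  (∀ i, ∀ t ∈ Set.Icc (0:ℝ) Rs, Bhat N B i Rs - Bhat N B i (Rs - t) ≤ B i t) ∧
  (∀ i, B i (f i) = Bhat N B i Rs - Bhat N B i (Rs - f i)) ∧
  (∀ i, ∀ t ∈ Set.Icc (0:ℝ) Rs,
    Bhat N B i Rs - Bhat N B i (Rs - t) - (∫ r in (0:ℝ)..t, lam i r) ≤
    Bhat N B i Rs - Bhat N B i (Rs - f i) - ∫ r in (0:ℝ)..(f i), lam i r)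

/-- A function having one-sided derivatives: a right derivative at every point of
`[0, Rs)` and a left derivative at every point of `(0, Rs]`. -/
def HasOneSidedDerivs (Rs : ℝ) (F : ℝ → ℝ) : Prop :=
  (∀ t ∈ Set.Ico (0:ℝ) Rs, ∃ d, HasDerivWithinAt F d (Set.Ici t) t) ∧
  (∀ t ∈ Set.Ioc (0:ℝ) Rs, ∃ d, HasDerivWithinAt F d (Set.Iic t) t)

/-! With linear prices `B i t = λ* t` every routing costs `λ* Rs` and each relay's virtual
competitor also charges `λ*` per unit, so conditions (i) and (ii) hold trivially and (iii)
says that `ropt i` maximises the concave profit `t ↦ λ* t - ∫₀ᵗ λᵢ`. This holds as soon as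
`λᵢ (ropt i) ≥ λ*`, which is the definition of `λ*`, and, when `ropt i > 0`,
`λᵢ (ropt i) ≤ λ*`. The latter is the first-order condition of social optimality: moving `ε`
of traffic from relay `i` to the relay `j` attaining `λ*` cannot lower the cost, whence
`λᵢ (ropt i - ε) ≤ λⱼ (ropt j + ε)`, and continuity lets `ε → 0`. -/

open Filter Topology

theorem MonotoneOn.mul_sub_le_integral {f : ℝ → ℝ} {x y : ℝ} (hf : MonotoneOn f (uIcc x y)) :
    f x * (y - x) ≤ ∫ t in x..y, f t := by
  rcases le_total x y with hxy | hyx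
  · have h := integral_mono_on (μ := volume) hxy intervalIntegrable_const hf.intervalIntegrable
      fun t ht => hf left_mem_uIcc (Icc_subset_uIcc ht) ht.1
    rwa [intervalIntegral.integral_const, smul_eq_mul, mul_comm] at h
  · have h := integral_mono_on (μ := volume) hyx hf.intervalIntegrable.symm intervalIntegrable_const
      fun t ht => hf (Icc_subset_uIcc' ht) left_mem_uIcc ht.2
    rw [intervalIntegral.integral_const, smul_eq_mul] at h
    rw [integral_symm]
    linarith

theorem MonotoneOn.integral_le_mul_sub {f : ℝ → ℝ} {x y : ℝ} (hf : MonotoneOn f (uIcc x y)) :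
    ∫ t in x..y, f t ≤ f y * (y - x) := by
  have h := (uIcc_comm x y ▸ hf).mul_sub_le_integral
  rw [integral_symm]
  linarith

theorem MonotoneOn.integral_sub_integral {f : ℝ → ℝ} {a b x y : ℝ} (hf : MonotoneOn f (Icc a b))
    (hx : x ∈ Icc a b) (hy : y ∈ Icc a b) :
    (∫ t in a..y, f t) - ∫ t in a..x, f t = ∫ t in x..y, f t :=
  have ha : a ∈ Icc a b := left_mem_Icc.2 (hx.1.trans hx.2)
  integral_interval_sub_left (hf.mono (uIcc_subset_Icc ha hy)).intervalIntegrable (μ := volume)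
    (hf.mono (uIcc_subset_Icc ha hx)).intervalIntegrable

theorem Bhat_const_mul {N : ℕ} [Nontrivial (Fin N)] (c : ℝ) (i : Fin N) {s : ℝ} (hs : 0 ≤ s) :
    Bhat N (fun _ t => c * t) i s = c * s := by
  obtain ⟨j, hji⟩ := exists_ne i
  have hj : j ∈ univ.erase i := mem_erase.2 ⟨hji, mem_univ j⟩
  refine (congrArg sInf ?_).trans (csInf_singleton (c * s))
  ext x
  simp only [mem_ofPred_eq, mem_singleton_iff]
  constructor
  · rintro ⟨g, -, hg, rfl⟩
    rw [← mul_sum, hg]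
  · rintro rfl
    refine ⟨Pi.single j s, fun k => ?_, by simp [hj], by simp [← mul_sum, hj]⟩
    rw [Pi.single_apply]
    split_ifs <;> simp [hs]

section Routing

variable {N : ℕ} {Rs : ℝ} {f : Fin N → ℝ}

theorem IsRouting.mem_Icc (hf : IsRouting N Rs f) (i : Fin N) : f i ∈ Icc 0 Rs :=
  ⟨hf.1 i, hf.2 ▸ single_le_sum (fun k _ => hf.1 k) (mem_univ i)⟩

theorem IsRouting.total_nonneg (hf : IsRouting N Rs f) : 0 ≤ Rs :=
  hf.2 ▸ sum_nonneg fun k _ => hf.1 k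

theorem IsRouting.transfer (hf : IsRouting N Rs f) {i j : Fin N} {ε : ℝ} (hε : 0 ≤ ε)
    (hεi : ε ≤ f i) : IsRouting N Rs (f + Pi.single j ε - Pi.single i ε) := by
  refine ⟨fun k => ?_, ?_⟩
  · simp only [Pi.sub_apply, Pi.add_apply, Pi.single_apply]
    split_ifs <;> subst_vars <;> linarith [hf.1 k]
  · simp [sum_add_distrib, sum_sub_distrib, hf.2]

theorem totalCost_transfer (lam : Fin N → ℝ → ℝ) {i j : Fin N} (hij : i ≠ j) (ε : ℝ) :
    totalCost N lam (f + Pi.single j ε - Pi.single i ε) = totalCost N lam f +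
      ((∫ r in 0..f i - ε, lam i r) - ∫ r in 0..f i, lam i r) +
      ((∫ r in 0..f j + ε, lam j r) - ∫ r in 0..f j, lam j r) := by
  set g := f + Pi.single j ε - Pi.single i ε with hg
  have h : totalCost N lam g - totalCost N lam f =
      ∑ k, ((∫ r in 0..g k, lam k r) - ∫ r in 0..f k, lam k r) := (sum_sub_distrib ..).symm
  rw [Fintype.sum_eq_add i j hij fun k hk => by simp [hg, hk.1, hk.2]] at h
  simp only [hg, Pi.add_apply, Pi.sub_apply, Pi.single_eq_same, Pi.single_eq_of_ne hij,
    Pi.single_eq_of_ne hij.symm, add_zero, sub_zero] at h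
  linarith

end Routing

section Optimality

variable {N : ℕ} {Rs : ℝ} {lam : Fin N → ℝ → ℝ} {f : Fin N → ℝ}

theorem IsSociallyOptimal.marginal_le (hopt : IsSociallyOptimal N Rs lam f)
    (hcont : ∀ k, ContinuousOn (lam k) (Icc 0 Rs)) (hmono : ∀ k, MonotoneOn (lam k) (Icc 0 Rs))
    {i : Fin N} (hi : 0 < f i) (j : Fin N) : lam i (f i) ≤ lam j (f j) := by
  rcases eq_or_ne i j with rfl | hij
  · rfl
  have hmem : ∀ ε ∈ Ioc 0 (f i), f i - ε ∈ Icc 0 Rs ∧ f j + ε ∈ Icc 0 Rs := fun ε hε => by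
    have hg := hopt.1.transfer (j := j) hε.1.le hε.2
    simpa [hij, hij.symm] using And.intro (hg.mem_Icc i) (hg.mem_Icc j)
  have hshift : ∀ ε ∈ Ioc 0 (f i), lam i (f i - ε) ≤ lam j (f j + ε) := by
    intro ε hε
    have hcost := hopt.2 _ (hopt.1.transfer (j := j) hε.1.le hε.2)
    rw [totalCost_transfer lam hij,
      (hmono i).integral_sub_integral (hopt.1.mem_Icc i) (hmem ε hε).1,
      (hmono j).integral_sub_integral (hopt.1.mem_Icc j) (hmem ε hε).2] at hcost
    have hi' := ((hmono i).mono
      (uIcc_subset_Icc (hopt.1.mem_Icc i) (hmem ε hε).1)).integral_le_mul_sub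
    have hj' := ((hmono j).mono
      (uIcc_subset_Icc (hopt.1.mem_Icc j) (hmem ε hε).2)).integral_le_mul_sub
    nlinarith [hε.1]
  have hsmall : ∀ᶠ ε in 𝓝[>] (0 : ℝ), ε ∈ Ioc 0 (f i) :=
    mem_of_superset (Ioo_mem_nhdsGT hi) Ioo_subset_Ioc_self
  have hleft : Tendsto (fun ε => f i - ε) (𝓝[>] 0) (𝓝[Icc 0 Rs] (f i)) :=
    tendsto_nhdsWithin_iff.2 ⟨((continuous_const.sub continuous_id).tendsto' 0 (f i)
      (sub_zero _)).mono_left nhdsWithin_le_nhds, hsmall.mono fun ε hε => (hmem ε hε).1⟩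
  have hright : Tendsto (fun ε => f j + ε) (𝓝[>] 0) (𝓝[Icc 0 Rs] (f j)) :=
    tendsto_nhdsWithin_iff.2 ⟨((continuous_const.add continuous_id).tendsto' 0 (f j)
      (add_zero _)).mono_left nhdsWithin_le_nhds, hsmall.mono fun ε hε => (hmem ε hε).2⟩
  exact le_of_tendsto_of_tendsto
    (((hcont i).continuousWithinAt (hopt.1.mem_Icc i)).tendsto.comp hleft)
    (((hcont j).continuousWithinAt (hopt.1.mem_Icc j)).tendsto.comp hright)
    (hsmall.mono hshift)

theorem IsSociallyOptimal.profit_le_profit_opt (hopt : IsSociallyOptimal N Rs lam f)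
    (hcont : ∀ k, ContinuousOn (lam k) (Icc 0 Rs)) (hmono : ∀ k, MonotoneOn (lam k) (Icc 0 Rs))
    {c : ℝ} (hc : IsLeast (range fun j => lam j (f j)) c) (i : Fin N) {t : ℝ}
    (ht : t ∈ Icc 0 Rs) :
    c * t - ∫ r in 0..t, lam i r ≤ c * f i - ∫ r in 0..f i, lam i r := by
  have hfi := hopt.1.mem_Icc i
  have hslope : c * (t - f i) ≤ lam i (f i) * (t - f i) := by
    rcases le_or_gt (f i) t with hle | hlt
    · exact mul_le_mul_of_nonneg_right (hc.2 ⟨i, rfl⟩) (sub_nonneg.2 hle)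
    · obtain ⟨j, rfl⟩ := hc.1
      exact mul_le_mul_of_nonpos_right (hopt.marginal_le hcont hmono (ht.1.trans_lt hlt) j)
        (sub_nonpos.2 hlt.le)
  have hint := ((hmono i).mono (uIcc_subset_Icc hfi ht)).mul_sub_le_integral
  rw [← (hmono i).integral_sub_integral hfi ht] at hint
  linarith

end Optimality

theorem isEquilibrium_const_mul {N : ℕ} [Nontrivial (Fin N)] {Rs c : ℝ} {lam : Fin N → ℝ → ℝ}
    {f : Fin N → ℝ} (hc : 0 ≤ c) (hf : IsRouting N Rs f)
    (hprofit : ∀ i, ∀ t ∈ Icc 0 Rs,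
      c * t - ∫ r in 0..t, lam i r ≤ c * f i - ∫ r in 0..f i, lam i r) :
    IsEquilibrium N Rs lam (fun _ t => c * t) f := by
  have hB : ∀ i, ∀ t ∈ Icc 0 Rs,
      Bhat N (fun _ t => c * t) i Rs - Bhat N (fun _ t => c * t) i (Rs - t) = c * t := by
    intro i t ht
    rw [Bhat_const_mul c i hf.total_nonneg, Bhat_const_mul c i (sub_nonneg.2 ht.2)]
    ring
  refine ⟨fun i => ⟨(continuous_const_mul c).continuousOn,
      fun a _ b _ hab => mul_le_mul_of_nonneg_left hab hc, mul_zero c⟩,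
    hf, fun g hg => by simp only [← mul_sum, hf.2, hg.2, le_rfl],
    fun i t ht => (hB i t ht).le, fun i => (hB i _ (hf.mem_Icc i)).symm, fun i t ht => ?_⟩
  rw [hB i t ht, hB i _ (hf.mem_Icc i)]
  exact hprofit i t ht

/-- The socially optimal routing of an oligopoly can always be induced by an
equilibrium: with `ropt` the socially optimal routing and `lamstar = min_j λ_j(ropt j)`,
the pricing profile `B i t = lamstar * t` together with `ropt` is an equilibrium. -/
theorem efficient_equilibrium_exists
    (N : ℕ) (Rs : ℝ) (lam : Fin N → ℝ → ℝ) (ropt : Fin N → ℝ) (lamstar : ℝ)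
    (holig : IsOligopoly N Rs lam)
    (hopt : IsSociallyOptimal N Rs lam ropt)
    (hmin : IsLeast (Set.range fun j => lam j (ropt j)) lamstar) :
    IsEquilibrium N Rs lam (fun _ t => lamstar * t) ropt := by
  obtain ⟨hN, -, hlam⟩ := holig
  have : Nontrivial (Fin N) := Fin.nontrivial_iff_two_le.2 hN
  obtain ⟨j, rfl⟩ := hmin.1
  have hpos : 0 ≤ lam j (ropt j) := ((hlam j).1 _ (hopt.1.mem_Icc j)).le
  have hcont k := (hlam k).2.1
  have hmono k := (hlam k).2.2.monotoneOn
  exact isEquilibrium_const_mul hpos hopt.1 fun i _ ht =>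
    hopt.profit_le_profit_opt hcont hmono hmin i ht
end

section
/- At any equilibrium ((B_i),(f_i^*)) of an oligopoly pricing game the following hold for the one-sided derivatives of the virtual-competitor cost functions: (a) if 0 < f_i^* ≤ R_s, then for every j ≠ i the right derivative of B_{î} at R_s − f_i^* is at most the right derivative of B_j at f_j^* (whenever these one-sided derivatives exist); (b) if 0 ≤ f_i^* < R_s, then for every j ≠ i with f_j^* > 0 the left derivative of B_{î} at R_s − f_i^* is at least the left derivative of B_j at f_j^* (whenever these one-sided derivatives exist). -/
open Finset MeasureTheory intervalIntegral Set

/-- Right derivative of a function with a local minimum at `0` from the right is nonneg. -/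
lemma right_deriv_nonneg_of_min {F : ℝ → ℝ} {d δ : ℝ} (hδ : 0 < δ)
    (hF : HasDerivWithinAt F d (Set.Ici 0) 0)
    (h : ∀ ε ∈ Set.Ioc (0:ℝ) δ, F 0 ≤ F ε) : 0 ≤ d := by
  rw [hasDerivWithinAt_iff_tendsto_slope, Set.Ici_sdiff_left] at hF
  refine ge_of_tendsto hF ?_
  filter_upwards [Ioc_mem_nhdsGT_of_mem (by constructor <;> simp [hδ] : (0:ℝ) ∈ Set.Ico (0:ℝ) δ)]
    with ε hε
  have : slope F 0 ε = (F ε - F 0) / ε := by simp [slope_def_field]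
  rw [this]
  exact div_nonneg (sub_nonneg.2 (h ε hε)) hε.1.le

/-- Left derivative of a function with a local maximum at `0` from the left is nonneg. -/
lemma left_deriv_nonneg_of_max {F : ℝ → ℝ} {d δ : ℝ} (hδ : 0 < δ)
    (hF : HasDerivWithinAt F d (Set.Iic 0) 0)
    (h : ∀ ε ∈ Set.Ico (-δ) (0:ℝ), F ε ≤ F 0) : 0 ≤ d := by
  rw [hasDerivWithinAt_iff_tendsto_slope, Set.Iic_diff_right] at hF
  refine ge_of_tendsto hF ?_
  filter_upwards [Ico_mem_nhdsLT_of_mem (by constructor <;> simp [hδ] : (0:ℝ) ∈ Set.Ioc (-δ) 0)]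
    with ε hε
  have : slope F 0 ε = (F ε - F 0) / ε := by simp [slope_def_field]
  rw [this]
  exact div_nonneg_iff.2 (Or.inr ⟨sub_nonpos.2 (h ε hε), hε.2.le⟩)

lemma bhat_bddBelow (N : ℕ) (Rs : ℝ) (B : Fin N → ℝ → ℝ)
    (hB : IsPricingProfile N Rs B) (hRs : 0 ≤ Rs) (i : Fin N) (t : ℝ) (ht : t ≤ Rs) :
    BddBelow {c : ℝ | ∃ g : Fin N → ℝ, (∀ j, 0 ≤ g j) ∧
      (∑ j ∈ Finset.univ.erase i, g j) = t ∧ c = ∑ j ∈ Finset.univ.erase i, B j (g j)} := by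
  refine ⟨0, ?_⟩
  rintro c ⟨g, hg0, hgs, rfl⟩
  apply Finset.sum_nonneg
  intro k hk
  have hk1 : g k ≤ t := by
    rw [← hgs]
    exact Finset.single_le_sum (fun m _ => hg0 m) hk
  have h0 : (0:ℝ) ∈ Set.Icc (0:ℝ) Rs := ⟨le_rfl, hRs⟩
  have hgk : g k ∈ Set.Icc (0:ℝ) Rs := ⟨hg0 k, hk1.trans ht⟩
  have := (hB k).2.1 h0 hgk (hg0 k)
  rw [(hB k).2.2] at this
  exact this

lemma bhat_at_eq (N : ℕ) (Rs : ℝ) (lam B : Fin N → ℝ → ℝ) (f : Fin N → ℝ)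
    (heq : IsEquilibrium N Rs lam B f) (i : Fin N) :
    Bhat N B i (Rs - f i) = ∑ j ∈ Finset.univ.erase i, B j (f j) := by
  obtain ⟨hB, ⟨hf0, hfs⟩, hmin, -⟩ := heq
  have hiu : i ∈ (Finset.univ : Finset (Fin N)) := Finset.mem_univ i
  have hsum : ∑ j ∈ Finset.univ.erase i, f j = Rs - f i := by
    have := Finset.add_sum_erase Finset.univ f hiu
    linarith [hfs]
  have hmem : (∑ j ∈ Finset.univ.erase i, B j (f j)) ∈
      {c : ℝ | ∃ g : Fin N → ℝ, (∀ j, 0 ≤ g j) ∧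
        (∑ j ∈ Finset.univ.erase i, g j) = Rs - f i ∧
        c = ∑ j ∈ Finset.univ.erase i, B j (g j)} := ⟨f, hf0, hsum, rfl⟩
  have hlb : ∀ c ∈ {c : ℝ | ∃ g : Fin N → ℝ, (∀ j, 0 ≤ g j) ∧
      (∑ j ∈ Finset.univ.erase i, g j) = Rs - f i ∧
      c = ∑ j ∈ Finset.univ.erase i, B j (g j)},
      (∑ j ∈ Finset.univ.erase i, B j (f j)) ≤ c := by
    rintro c ⟨g, hg0, hgs, rfl⟩
    set g' : Fin N → ℝ := Function.update g i (f i) with hg'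
    have hgg : ∀ F : Fin N → ℝ → ℝ, ∑ j ∈ Finset.univ.erase i, F j (g' j)
        = ∑ j ∈ Finset.univ.erase i, F j (g j) := by
      intro F
      apply Finset.sum_congr rfl
      intro k hk
      simp [hg', Function.update_of_ne (Finset.ne_of_mem_erase hk)]
    have hg'i : g' i = f i := by simp [hg']
    have hg'r : IsRouting N Rs g' := by
      constructor
      · intro k
        by_cases hk : k = i
        · simp [hg', hk, hf0 i]
        · simp [hg', Function.update_of_ne hk, hg0 k]
      · have h2 := Finset.add_sum_erase Finset.univ g' hiu
        rw [← h2, hgg (fun _ x => x), hgs, hg'i]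
        ring
    have hm := hmin g' hg'r
    have hfi := Finset.add_sum_erase Finset.univ (fun k => B k (f k)) hiu
    have hgi := Finset.add_sum_erase Finset.univ (fun k => B k (g' k)) hiu
    have hgg2 := hgg B
    rw [hg'i] at hgi
    linarith
  exact le_antisymm (csInf_le ⟨_, hlb⟩ hmem) (le_csInf ⟨_, hmem⟩ hlb)

/-- Key perturbation bound. -/
lemma bhat_perturb (N : ℕ) (Rs : ℝ) (lam B : Fin N → ℝ → ℝ) (f : Fin N → ℝ)
    (heq : IsEquilibrium N Rs lam B f) (i j : Fin N) (hj : j ≠ i) (ε : ℝ)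
    (hRs : 0 ≤ Rs)
    (h1 : 0 ≤ f j + ε) (h2 : Rs - f i + ε ≤ Rs) :
    Bhat N B i (Rs - f i + ε) ≤ Bhat N B i (Rs - f i) + (B j (f j + ε) - B j (f j)) := by
  have hBeq := bhat_at_eq N Rs lam B f heq i
  obtain ⟨hB, ⟨hf0, hfs⟩, hmin, -⟩ := heq
  have hiu : i ∈ (Finset.univ : Finset (Fin N)) := Finset.mem_univ i
  have hje : j ∈ Finset.univ.erase i := Finset.mem_erase.2 ⟨hj, Finset.mem_univ j⟩
  have hsum : ∑ k ∈ Finset.univ.erase i, f k = Rs - f i := by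
    have := Finset.add_sum_erase Finset.univ f hiu
    linarith [hfs]
  set g : Fin N → ℝ := Function.update f j (f j + ε) with hg
  have hgj : g j = f j + ε := by simp [hg]
  have hgk : ∀ F : Fin N → ℝ → ℝ, ∑ k ∈ (Finset.univ.erase i).erase j, F k (g k)
      = ∑ k ∈ (Finset.univ.erase i).erase j, F k (f k) := by
    intro F
    apply Finset.sum_congr rfl
    intro k hk
    simp [hg, Function.update_of_ne (Finset.ne_of_mem_erase hk)]
  have hgs : ∑ k ∈ Finset.univ.erase i, g k = Rs - f i + ε := by
    rw [← Finset.add_sum_erase _ g hje, hgk (fun _ x => x), hgj,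
      ← hsum, ← Finset.add_sum_erase _ f hje]
    ring
  have hg0 : ∀ k, 0 ≤ g k := by
    intro k
    by_cases hk : k = j
    · rw [hk, hgj]; exact h1
    · simp [hg, Function.update_of_ne hk, hf0 k]
  have hmem : (∑ k ∈ Finset.univ.erase i, B k (g k)) ∈
      {c : ℝ | ∃ g : Fin N → ℝ, (∀ j, 0 ≤ g j) ∧
        (∑ j ∈ Finset.univ.erase i, g j) = Rs - f i + ε ∧
        c = ∑ j ∈ Finset.univ.erase i, B j (g j)} := ⟨g, hg0, hgs, rfl⟩
  have hle : Bhat N B i (Rs - f i + ε) ≤ ∑ k ∈ Finset.univ.erase i, B k (g k) :=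
    csInf_le (bhat_bddBelow N Rs B hB hRs i _ h2) hmem
  have e1 : ∑ k ∈ Finset.univ.erase i, B k (g k)
      = B j (f j + ε) + ∑ k ∈ (Finset.univ.erase i).erase j, B k (f k) := by
    rw [← Finset.add_sum_erase _ (fun k => B k (g k)) hje, hgk B, hgj]
  have e2 : ∑ k ∈ Finset.univ.erase i, B k (f k)
      = B j (f j) + ∑ k ∈ (Finset.univ.erase i).erase j, B k (f k) :=
    (Finset.add_sum_erase _ (fun k => B k (f k)) hje).symm
  rw [hBeq]
  linarith

/-- One-sided derivative bounds on the virtual-competitor cost functions at an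
equilibrium (Lemma `OligVirtualMargin`). -/
theorem equilibrium_virtual_marginal_bounds
    (N : ℕ) (Rs : ℝ) (lam B : Fin N → ℝ → ℝ) (f : Fin N → ℝ)
    (holig : IsOligopoly N Rs lam)
    (heq : IsEquilibrium N Rs lam B f) (i : Fin N) :
    (0 < f i → f i ≤ Rs → ∀ j, j ≠ i →
      ∀ d1 d2 : ℝ,
        HasDerivWithinAt (Bhat N B i) d1 (Set.Ici (Rs - f i)) (Rs - f i) →
        HasDerivWithinAt (B j) d2 (Set.Ici (f j)) (f j) →
        d1 ≤ d2) ∧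
    (0 ≤ f i → f i < Rs → ∀ j, j ≠ i → 0 < f j →
      ∀ d1 d2 : ℝ,
        HasDerivWithinAt (Bhat N B i) d1 (Set.Iic (Rs - f i)) (Rs - f i) →
        HasDerivWithinAt (B j) d2 (Set.Iic (f j)) (f j) →
        d2 ≤ d1) := by
  obtain ⟨hN, hRs, hlam⟩ := holig
  have hRs0 : (0:ℝ) ≤ Rs := hRs.le
  have hf0 : ∀ k, 0 ≤ f k := heq.2.1.1
  constructor
  · intro hfi hfiR j hj d1 d2 hd1 hd2
    -- right derivatives
    have hd1' : HasDerivWithinAt (Bhat N B i) d1 (Set.Ici (Rs - f i))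
        ((fun ε : ℝ => Rs - f i + ε) 0) := by simpa using hd1
    have hd2' : HasDerivWithinAt (B j) d2 (Set.Ici (f j))
        ((fun ε : ℝ => f j + ε) 0) := by simpa using hd2
    have c1 : HasDerivWithinAt (fun ε : ℝ => Bhat N B i (Rs - f i + ε)) (d1 * 1)
        (Set.Ici 0) 0 := by
      have := HasDerivWithinAt.comp (𝕜 := ℝ) (h₂ := Bhat N B i)
        (h := fun ε : ℝ => Rs - f i + ε) (x := 0) (s := Set.Ici 0)
        (s' := Set.Ici (Rs - f i)) hd1'
        ((hasDerivWithinAt_id (0:ℝ) (Set.Ici 0)).const_add (Rs - f i))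
        (fun x hx => by simp only [Set.mem_Ici] at hx ⊢; linarith)
      exact this
    have c2 : HasDerivWithinAt (fun ε : ℝ => B j (f j + ε)) (d2 * 1)
        (Set.Ici 0) 0 := by
      have := HasDerivWithinAt.comp (𝕜 := ℝ) (h₂ := B j)
        (h := fun ε : ℝ => f j + ε) (x := 0) (s := Set.Ici 0)
        (s' := Set.Ici (f j)) hd2'
        ((hasDerivWithinAt_id (0:ℝ) (Set.Ici 0)).const_add (f j))
        (fun x hx => by simp only [Set.mem_Ici] at hx ⊢; linarith)
      exact this
    have hh : HasDerivWithinAt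
        (fun ε : ℝ => B j (f j + ε) - Bhat N B i (Rs - f i + ε))
        (d2 * 1 - d1 * 1) (Set.Ici 0) 0 := c2.sub c1
    have key : 0 ≤ d2 * 1 - d1 * 1 := by
      apply right_deriv_nonneg_of_min hfi hh
      intro ε hε
      have hp := bhat_perturb N Rs lam B f heq i j hj ε hRs0
        (by linarith [hf0 j, hε.1]) (by linarith [hε.2])
      simp only [add_zero]
      linarith
    linarith
  · intro hfi hfiR j hj hfj d1 d2 hd1 hd2
    have hd1' : HasDerivWithinAt (Bhat N B i) d1 (Set.Iic (Rs - f i))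
        ((fun ε : ℝ => Rs - f i + ε) 0) := by simpa using hd1
    have hd2' : HasDerivWithinAt (B j) d2 (Set.Iic (f j))
        ((fun ε : ℝ => f j + ε) 0) := by simpa using hd2
    have c1 : HasDerivWithinAt (fun ε : ℝ => Bhat N B i (Rs - f i + ε)) (d1 * 1)
        (Set.Iic 0) 0 := by
      have := HasDerivWithinAt.comp (𝕜 := ℝ) (h₂ := Bhat N B i)
        (h := fun ε : ℝ => Rs - f i + ε) (x := 0) (s := Set.Iic 0)
        (s' := Set.Iic (Rs - f i)) hd1'
        ((hasDerivWithinAt_id (0:ℝ) (Set.Iic 0)).const_add (Rs - f i))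
        (fun x hx => by simp only [Set.mem_Iic] at hx ⊢; linarith)
      exact this
    have c2 : HasDerivWithinAt (fun ε : ℝ => B j (f j + ε)) (d2 * 1)
        (Set.Iic 0) 0 := by
      have := HasDerivWithinAt.comp (𝕜 := ℝ) (h₂ := B j)
        (h := fun ε : ℝ => f j + ε) (x := 0) (s := Set.Iic 0)
        (s' := Set.Iic (f j)) hd2'
        ((hasDerivWithinAt_id (0:ℝ) (Set.Iic 0)).const_add (f j))
        (fun x hx => by simp only [Set.mem_Iic] at hx ⊢; linarith)
      exact this
    have hh : HasDerivWithinAt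
        (fun ε : ℝ => Bhat N B i (Rs - f i + ε) - B j (f j + ε))
        (d1 * 1 - d2 * 1) (Set.Iic 0) 0 := c1.sub c2
    have key : 0 ≤ d1 * 1 - d2 * 1 := by
      apply left_deriv_nonneg_of_max hfj hh
      intro ε hε
      have hp := bhat_perturb N Rs lam B f heq i j hj ε hRs0
        (by linarith [hε.1]) (by linarith [hε.2, hfi])
      simp only [add_zero]
      linarith
    linarith
end

section
/- If an equilibrium ((B_i),(f_i^*)) of an oligopoly pricing game is monopolistic with dominant relay m (that is, f_m^* = R_s and f_j^* = 0 for all j ≠ m), then ∫_0^{R_s} λ_m(r) dr ≤ ∫_0^{R_s} λ_j(r) dr for every other relay j. -/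
open Finset MeasureTheory intervalIntegral Set

lemma Bhat_zero_aux (N : ℕ) (B : Fin N → ℝ → ℝ) (hB0 : ∀ k, B k 0 = 0) (i : Fin N) :
    Bhat N B i 0 = 0 := by
  have hset : {c : ℝ | ∃ g : Fin N → ℝ, (∀ j, 0 ≤ g j) ∧
      (∑ j ∈ Finset.univ.erase i, g j) = 0 ∧ c = ∑ j ∈ Finset.univ.erase i, B j (g j)}
      = {(0:ℝ)} := by
    ext c
    simp only [Set.mem_setOf_eq, Set.mem_singleton_iff]
    constructor
    · rintro ⟨g, hg, hsum, rfl⟩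
      have hz : ∀ k ∈ Finset.univ.erase i, g k = 0 :=
        (Finset.sum_eq_zero_iff_of_nonneg (fun k _ => hg k)).mp hsum
      exact Finset.sum_eq_zero (fun k hk => by rw [hz k hk, hB0])
    · rintro rfl
      exact ⟨fun _ => 0, fun _ => le_refl 0, by simp,
        by rw [Finset.sum_eq_zero (fun k _ => hB0 k)]⟩
  rw [Bhat, hset, csInf_singleton]

/-- At a monopolistic equilibrium with dominant relay `m`, the dominant relay
has the minimum total marginal cost `∫_0^{Rs} λ_m`. -/
theorem monopolistic_equilibrium_min_cost
    (N : ℕ) (Rs : ℝ) (lam B : Fin N → ℝ → ℝ) (f : Fin N → ℝ) (m : Fin N)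
    (holig : IsOligopoly N Rs lam)
    (heq : IsEquilibrium N Rs lam B f)
    (hm : f m = Rs) (hz : ∀ j, j ≠ m → f j = 0)
    (j : Fin N) (hj : j ≠ m) :
    (∫ r in (0:ℝ)..Rs, lam m r) ≤ ∫ r in (0:ℝ)..Rs, lam j r := by
  obtain ⟨hN, hRs, hlam⟩ := holig
  obtain ⟨hB, hrout, hopt, hlb, heqty, hmax⟩ := heq
  have hB0 : ∀ k, B k 0 = 0 := fun k => (hB k).2.2
  have h0mem : (0:ℝ) ∈ Set.Icc (0:ℝ) Rs := ⟨le_refl 0, hRs.le⟩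
  have hRsmem : Rs ∈ Set.Icc (0:ℝ) Rs := ⟨hRs.le, le_refl Rs⟩
  -- Step A : total marginal cost of m is at most B m Rs
  have hA : (∫ r in (0:ℝ)..Rs, lam m r) ≤ B m Rs := by
    have h0 := hmax m 0 h0mem
    rw [← heqty m, hm] at h0
    simp only [sub_zero, sub_self, intervalIntegral.integral_same] at h0
    linarith
  -- Step B : Bhat_j(Rs) - Bhat_j(0) is at most the total marginal cost of j
  have hBj : Bhat N B j Rs - Bhat N B j 0 ≤ ∫ r in (0:ℝ)..Rs, lam j r := by
    have h0 := hmax j Rs hRsmem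
    rw [hz j hj] at h0
    simp only [sub_zero, sub_self, intervalIntegral.integral_same] at h0
    linarith
  -- Step C
  have hC : Bhat N B j 0 = 0 := Bhat_zero_aux N B hB0 j
  -- equilibrium cost equals B m Rs
  have hcost : ∑ i, B i (f i) = B m Rs := by
    rw [Fintype.sum_eq_single m (fun k hk => by rw [hz k hk, hB0]), hm]
  -- Step D : B m Rs ≤ Bhat_j(Rs)
  have hD : B m Rs ≤ Bhat N B j Rs := by
    rw [Bhat]
    apply le_csInf
    · refine ⟨∑ k ∈ Finset.univ.erase j, B k ((fun k => if k = m then Rs else 0) k),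
        fun k => if k = m then Rs else 0,
        fun k => by dsimp only; split <;> simp [hRs.le], ?_, rfl⟩
      rw [Finset.sum_eq_single_of_mem m
        (Finset.mem_erase.mpr ⟨(Ne.symm hj), Finset.mem_univ m⟩)
        (fun k _ hk => if_neg hk), if_pos rfl]
    · rintro c ⟨g, hg, hsum, rfl⟩
      set h : Fin N → ℝ := fun k => if k = j then 0 else g k with hh
      have hhsum : ∑ k ∈ Finset.univ.erase j, h k = Rs := by
        rw [Finset.sum_congr rfl
          (fun k hk => if_neg (Finset.ne_of_mem_erase hk)), hsum]
      have hrouth : IsRouting N Rs h := by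
        refine ⟨fun k => by dsimp only [h]; split <;> [exact le_refl 0; exact hg k], ?_⟩
        rw [← Finset.add_sum_erase _ h (Finset.mem_univ j), hhsum]
        simp [h]
      have hle := hopt h hrouth
      rw [hcost] at hle
      calc B m Rs ≤ ∑ i, B i (h i) := hle
        _ = ∑ k ∈ Finset.univ.erase j, B k (g k) := by
            rw [← Finset.add_sum_erase _ (fun i => B i (h i)) (Finset.mem_univ j)]
            have h1 : B j (h j) = 0 := by simp [h, hB0]
            rw [h1, zero_add]
            exact Finset.sum_congr rfl (fun k hk => by
              rw [hh]; dsimp only; rw [if_neg (Finset.ne_of_mem_erase hk)])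
  linarith
end

section
/- If the socially optimal routing of an oligopoly pricing game is monopolistic (it assigns r_m^* = R_s to a single relay m and 0 to all others), then every equilibrium of the game is monopolistic and efficient: the routing induced by any equilibrium assigns all of R_s to that same relay m. -/
open Finset MeasureTheory intervalIntegral Set

lemma myokai_int_shift_le (lam : ℝ → ℝ) (Rs a b c d : ℝ)
    (hcont : ContinuousOn lam (Set.Icc 0 Rs)) (hmono : MonotoneOn lam (Set.Icc 0 Rs))
    (ha : 0 ≤ a) (hab : a ≤ b) (hac : a ≤ c) (hd : d ≤ Rs) (hlen : d - c = b - a) :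
    (∫ r in a..b, lam r) ≤ ∫ r in c..d, lam r := by
  have hL0 : 0 ≤ c - a := by linarith
  have hbRs : b ≤ Rs := by linarith
  have hc2 : c = a + (c - a) := by ring
  have hd2 : d = b + (c - a) := by linarith
  have hsub1 : Set.Icc a b ⊆ Set.Icc 0 Rs := Set.Icc_subset_Icc ha hbRs
  have hint1 : IntervalIntegrable lam volume a b := by
    apply ContinuousOn.intervalIntegrable
    rw [Set.uIcc_of_le hab]
    exact hcont.mono hsub1
  have hcont2 : ContinuousOn (fun r => lam (r + (c - a))) (Set.Icc a b) := by
    apply hcont.comp (by fun_prop)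
    intro x hx
    exact ⟨by simp at hx ⊢; linarith [hx.1], by simp at hx ⊢; linarith [hx.2]⟩
  have hint2 : IntervalIntegrable (fun r => lam (r + (c - a))) volume a b := by
    apply ContinuousOn.intervalIntegrable
    rw [Set.uIcc_of_le hab]
    exact hcont2
  rw [hc2, hd2, ← intervalIntegral.integral_comp_add_right]
  apply intervalIntegral.integral_mono_on hab hint1 hint2
  intro x hx
  exact hmono ⟨by linarith [hx.1], by linarith [hx.2]⟩
    ⟨by linarith [hx.1], by linarith [hx.2]⟩ (by linarith)

lemma myokai_int_shift_lt (lam : ℝ → ℝ) (Rs a b c d : ℝ)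
    (hcont : ContinuousOn lam (Set.Icc 0 Rs)) (hmono : StrictMonoOn lam (Set.Icc 0 Rs))
    (ha : 0 ≤ a) (hab : a < b) (hac : a < c) (hd : d ≤ Rs) (hlen : d - c = b - a) :
    (∫ r in a..b, lam r) < ∫ r in c..d, lam r := by
  have hL0 : 0 < c - a := by linarith
  have hbRs : b ≤ Rs := by linarith
  have hc2 : c = a + (c - a) := by ring
  have hd2 : d = b + (c - a) := by linarith
  have hsub1 : Set.Icc a b ⊆ Set.Icc 0 Rs := Set.Icc_subset_Icc ha hbRs
  have hint1 : IntervalIntegrable lam volume a b := by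
    apply ContinuousOn.intervalIntegrable
    rw [Set.uIcc_of_le hab.le]
    exact hcont.mono hsub1
  have hcont2 : ContinuousOn (fun r => lam (r + (c - a))) (Set.Icc a b) := by
    apply hcont.comp (by fun_prop)
    intro x hx
    exact ⟨by simp at hx ⊢; linarith [hx.1], by simp at hx ⊢; linarith [hx.2]⟩
  have hint2 : IntervalIntegrable (fun r => lam (r + (c - a))) volume a b := by
    apply ContinuousOn.intervalIntegrable
    rw [Set.uIcc_of_le hab.le]
    exact hcont2
  have hpos : 0 < ∫ r in a..b, (lam (r + (c - a)) - lam r) := by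
    apply intervalIntegral_pos_of_pos_on (hint2.sub hint1) _ hab
    intro x hx
    have h1 : lam x < lam (x + (c - a)) := by
      apply hmono ⟨by linarith [hx.1], by linarith [hx.2]⟩
        ⟨by linarith [hx.1], by linarith [hx.2]⟩ (by linarith)
    linarith
  rw [intervalIntegral.integral_sub hint2 hint1] at hpos
  rw [hc2, hd2, ← intervalIntegral.integral_comp_add_right]
  linarith

/-- If the socially optimal routing is monopolistic (all flow to relay `m`),
then every equilibrium is monopolistic with the same dominant relay, hence efficient. -/
theorem monopolistic_optimum_equilibria_efficient
    (N : ℕ) (Rs : ℝ) (lam B : Fin N → ℝ → ℝ) (ropt f : Fin N → ℝ) (m : Fin N)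
    (holig : IsOligopoly N Rs lam)
    (hopt : IsSociallyOptimal N Rs lam ropt)
    (hoptm : ropt m = Rs) (hoptz : ∀ j, j ≠ m → ropt j = 0)
    (heq : IsEquilibrium N Rs lam B f)
    (hderivB : ∀ i, HasOneSidedDerivs Rs (B i))
    (hderivBhat : ∀ i, HasOneSidedDerivs Rs (Bhat N B i)) :
    (f m = Rs ∧ ∀ j, j ≠ m → f j = 0) ∧ f = ropt := by
  obtain ⟨hN, hRs, hlam⟩ := holig
  obtain ⟨hprice, ⟨hfnn, hfsum⟩, hmin, hlb, hpay, hmax⟩ := heq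
  have hfle : ∀ i, f i ≤ Rs := by
    intro i
    rw [← hfsum]
    exact Finset.single_le_sum (fun k _ => hfnn k) (Finset.mem_univ i)
  have hInt : ∀ (i : Fin N) (a b : ℝ), 0 ≤ a → a ≤ b → b ≤ Rs →
      IntervalIntegrable (lam i) volume a b := by
    intro i a b h1 h2 h3
    apply ContinuousOn.intervalIntegrable
    rw [Set.uIcc_of_le h2]
    exact (hlam i).2.1.mono (Set.Icc_subset_Icc h1 h3)
  -- consequence of social optimality
  have hopt2 : ∀ j : Fin N, j ≠ m → ∀ ε : ℝ, 0 ≤ ε → ε ≤ Rs →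
      (∫ r in (Rs - ε)..Rs, lam m r) ≤ ∫ r in (0:ℝ)..ε, lam j r := by
    intro j hj ε hε0 hεR
    set g : Fin N → ℝ := fun k => if k = m then Rs - ε else if k = j then ε else 0 with hg
    have hgm : g m = Rs - ε := by simp [hg]
    have hgj : g j = ε := by simp [hg, hj]
    have hgz : ∀ k, k ≠ m → k ≠ j → g k = 0 := by intro k h1 h2; simp [hg, h1, h2]
    have hjm : j ∈ Finset.univ.erase m := Finset.mem_erase.2 ⟨hj, Finset.mem_univ j⟩
    have hgrout : IsRouting N Rs g := by
      constructor
      · intro k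
        by_cases h1 : k = m
        · subst h1; rw [hgm]; linarith
        · by_cases h2 : k = j
          · subst h2; rw [hgj]; linarith
          · rw [hgz k h1 h2]
      · have h1 : ∑ k ∈ (Finset.univ.erase m).erase j, g k = 0 :=
          Finset.sum_eq_zero fun k hk =>
            hgz k (Finset.mem_erase.1 (Finset.mem_erase.1 hk).2).1 (Finset.mem_erase.1 hk).1
        rw [← Finset.sum_erase_add Finset.univ g (Finset.mem_univ m),
          ← Finset.sum_erase_add (Finset.univ.erase m) g hjm, h1, hgm, hgj]
        ring
    have hcg : totalCost N lam g =
        (∫ r in (0:ℝ)..(Rs - ε), lam m r) + ∫ r in (0:ℝ)..ε, lam j r := by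
      unfold totalCost
      have h1 : ∑ k ∈ (Finset.univ.erase m).erase j, (∫ r in (0:ℝ)..(g k), lam k r) = 0 := by
        apply Finset.sum_eq_zero
        intro k hk
        rw [hgz k (Finset.mem_erase.1 (Finset.mem_erase.1 hk).2).1 (Finset.mem_erase.1 hk).1,
          intervalIntegral.integral_same]
      rw [← Finset.sum_erase_add Finset.univ _ (Finset.mem_univ m),
        ← Finset.sum_erase_add (Finset.univ.erase m) _ hjm, h1, hgm, hgj]
      ring
    have hcr : totalCost N lam ropt = ∫ r in (0:ℝ)..Rs, lam m r := by
      unfold totalCost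
      rw [Finset.sum_eq_single m]
      · rw [hoptm]
      · intro k _ hk; rw [hoptz k hk, intervalIntegral.integral_same]
      · intro h; exact absurd (Finset.mem_univ m) h
    have hsplit : (∫ r in (0:ℝ)..(Rs - ε), lam m r) + (∫ r in (Rs - ε)..Rs, lam m r)
        = ∫ r in (0:ℝ)..Rs, lam m r :=
      intervalIntegral.integral_add_adjacent_intervals
        (hInt m 0 (Rs - ε) le_rfl (by linarith) (by linarith))
        (hInt m (Rs - ε) Rs (by linarith) (by linarith) le_rfl)
    have hfin := hopt.2 g hgrout
    rw [hcg, hcr] at hfin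
    linarith
  have hz : ∀ j, j ≠ m → f j = 0 := by
    intro j hj
    by_contra ht
    have htpos : 0 < f j := lt_of_le_of_ne (hfnn j) (Ne.symm ht)
    have hjm : j ∈ Finset.univ.erase m := Finset.mem_erase.2 ⟨hj, Finset.mem_univ j⟩
    have hsum_erase : ∑ k ∈ Finset.univ.erase m, f k = Rs - f m := by
      have h2 := Finset.sum_erase_add Finset.univ f (Finset.mem_univ m)
      rw [hfsum] at h2; linarith
    have hfmt : f m + f j ≤ Rs := by
      have h1 : f j ≤ ∑ k ∈ Finset.univ.erase m, f k :=
        Finset.single_le_sum (fun k _ => hfnn k) hjm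
      rw [hsum_erase] at h1; linarith
    set S := ∑ k ∈ Finset.univ.erase m, B k (f k) with hS
    have hA : S ≤ Bhat N B m (Rs - f m) := by
      unfold Bhat
      refine le_csInf ⟨S, f, hfnn, hsum_erase, hS⟩ ?_
      rintro c ⟨g, hg0, hgsum, rfl⟩
      have hg'e : ∀ k ∈ Finset.univ.erase m, Function.update g m (f m) k = g k := by
        intro k hk; exact Function.update_of_ne (Finset.mem_erase.1 hk).1 _ _
      have hgrout : IsRouting N Rs (Function.update g m (f m)) := by
        constructor
        · intro k
          by_cases h1 : k = m
          · rw [h1, Function.update_self]; exact hfnn m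
          · rw [Function.update_of_ne h1]; exact hg0 k
        · rw [← Finset.sum_erase_add Finset.univ _ (Finset.mem_univ m),
            Finset.sum_congr rfl hg'e, hgsum, Function.update_self]
          ring
      have h3 := hmin _ hgrout
      have h4 : ∑ i, B i (f i) = S + B m (f m) := by
        rw [hS, Finset.sum_erase_add Finset.univ (fun i => B i (f i)) (Finset.mem_univ m)]
      have h5 : ∑ i, B i (Function.update g m (f m) i)
          = (∑ k ∈ Finset.univ.erase m, B k (g k)) + B m (f m) := by
        rw [← Finset.sum_erase_add Finset.univ _ (Finset.mem_univ m), Function.update_self]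
        congr 1
        exact Finset.sum_congr rfl fun k hk => by rw [hg'e k hk]
      rw [h4, h5] at h3
      linarith
    have hBdd : BddBelow {c : ℝ | ∃ g : Fin N → ℝ, (∀ k, 0 ≤ g k) ∧
        (∑ k ∈ Finset.univ.erase m, g k) = Rs - f m - f j ∧
        c = ∑ k ∈ Finset.univ.erase m, B k (g k)} := by
      refine ⟨0, ?_⟩
      rintro c ⟨g, hg0, hgsum, rfl⟩
      apply Finset.sum_nonneg
      intro k hk
      have hk1 : g k ≤ Rs := by
        have h1 : g k ≤ Rs - f m - f j := by
          rw [← hgsum]; exact Finset.single_le_sum (fun l _ => hg0 l) hk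
        linarith [hfnn m, htpos]
      have h2 := (hprice k).2.1 (Set.mem_Icc.2 ⟨le_rfl, hRs.le⟩)
        (Set.mem_Icc.2 ⟨hg0 k, hk1⟩) (hg0 k)
      rw [(hprice k).2.2] at h2
      exact h2
    have hval : ∑ k ∈ Finset.univ.erase m, B k (Function.update f j 0 k) = S - B j (f j) := by
      have h1 : ∑ k ∈ (Finset.univ.erase m).erase j, B k (Function.update f j 0 k)
          + B j (Function.update f j 0 j)
          = ∑ k ∈ Finset.univ.erase m, B k (Function.update f j 0 k) :=
        Finset.sum_erase_add _ _ hjm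
      have h2 : ∑ k ∈ (Finset.univ.erase m).erase j, B k (Function.update f j 0 k)
          = ∑ k ∈ (Finset.univ.erase m).erase j, B k (f k) :=
        Finset.sum_congr rfl fun k hk => by
          rw [Function.update_of_ne (Finset.mem_erase.1 hk).1]
      have h3 : ∑ k ∈ (Finset.univ.erase m).erase j, B k (f k) + B j (f j)
          = ∑ k ∈ Finset.univ.erase m, B k (f k) :=
        Finset.sum_erase_add _ _ hjm
      rw [h2, Function.update_self, (hprice j).2.2] at h1
      rw [← hS] at h3
      linarith
    have hB : Bhat N B m (Rs - f m - f j) ≤ S - B j (f j) := by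
      unfold Bhat
      apply csInf_le hBdd
      refine ⟨Function.update f j 0, ?_, ?_, hval.symm⟩
      · intro k
        by_cases h1 : k = j
        · subst h1; rw [Function.update_self]
        · rw [Function.update_of_ne h1]; exact hfnn k
      · have h2 : ∑ k ∈ (Finset.univ.erase m).erase j, Function.update f j 0 k
            = ∑ k ∈ (Finset.univ.erase m).erase j, f k :=
          Finset.sum_congr rfl fun k hk => by
            rw [Function.update_of_ne (Finset.mem_erase.1 hk).1]
        have h3 := Finset.sum_erase_add (Finset.univ.erase m) f hjm
        rw [← Finset.sum_erase_add (Finset.univ.erase m) _ hjm, h2, Function.update_self,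
          add_zero]
        rw [hsum_erase] at h3
        linarith
    have hC := hmax m (f m + f j) (Set.mem_Icc.2 ⟨by linarith [hfnn m], hfmt⟩)
    have hre : Rs - (f m + f j) = Rs - f m - f j := by ring
    rw [hre] at hC
    have hsplitm : (∫ r in (0:ℝ)..(f m), lam m r) + (∫ r in (f m)..(f m + f j), lam m r)
        = ∫ r in (0:ℝ)..(f m + f j), lam m r :=
      intervalIntegral.integral_add_adjacent_intervals
        (hInt m 0 (f m) le_rfl (hfnn m) (hfle m))
        (hInt m (f m) (f m + f j) (hfnn m) (by linarith) hfmt)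
    have hD : (0:ℝ) ≤ Bhat N B j Rs - Bhat N B j (Rs - f j) - ∫ r in (0:ℝ)..(f j), lam j r := by
      simpa using hmax j 0 (Set.mem_Icc.2 ⟨le_rfl, hRs.le⟩)
    have hDj : (∫ r in (0:ℝ)..(f j), lam j r) ≤ B j (f j) := by
      have := hpay j
      linarith
    have hstep1 : (∫ r in (f m)..(f m + f j), lam m r) ≤ ∫ r in (Rs - f j)..Rs, lam m r :=
      myokai_int_shift_le (lam m) Rs (f m) (f m + f j) (Rs - f j) Rs
        (hlam m).2.1 ((hlam m).2.2).monotoneOn (hfnn m) (by linarith) (by linarith)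
        le_rfl (by ring)
    have hstep2 : (∫ r in (Rs - f j)..(Rs - f j / 2), lam m r)
        < ∫ r in (Rs - f j / 2)..Rs, lam m r :=
      myokai_int_shift_lt (lam m) Rs (Rs - f j) (Rs - f j / 2) (Rs - f j / 2) Rs
        (hlam m).2.1 (hlam m).2.2 (by linarith [hfle j]) (by linarith) (by linarith)
        le_rfl (by ring)
    have hstep3 : (∫ r in (Rs - f j / 2)..Rs, lam m r) ≤ ∫ r in (0:ℝ)..(f j / 2), lam j r :=
      hopt2 j hj (f j / 2) (by linarith) (by linarith [hfle j])
    have hstep4 : (∫ r in (0:ℝ)..(f j / 2), lam j r) ≤ ∫ r in (f j / 2)..(f j), lam j r :=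
      myokai_int_shift_le (lam j) Rs 0 (f j / 2) (f j / 2) (f j)
        (hlam j).2.1 ((hlam j).2.2).monotoneOn le_rfl (by linarith) (by linarith)
        (hfle j) (by ring)
    have hsplitA : (∫ r in (Rs - f j)..(Rs - f j / 2), lam m r)
        + (∫ r in (Rs - f j / 2)..Rs, lam m r) = ∫ r in (Rs - f j)..Rs, lam m r :=
      intervalIntegral.integral_add_adjacent_intervals
        (hInt m (Rs - f j) (Rs - f j / 2) (by linarith [hfle j]) (by linarith) (by linarith))
        (hInt m (Rs - f j / 2) Rs (by linarith [hfle j]) (by linarith) le_rfl)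
    have hsplitB : (∫ r in (0:ℝ)..(f j / 2), lam j r)
        + (∫ r in (f j / 2)..(f j), lam j r) = ∫ r in (0:ℝ)..(f j), lam j r :=
      intervalIntegral.integral_add_adjacent_intervals
        (hInt j 0 (f j / 2) le_rfl (by linarith) (by linarith [hfle j]))
        (hInt j (f j / 2) (f j) (by linarith) (by linarith) (hfle j))
    linarith
  have hfm : f m = Rs := by
    have h2 := Finset.sum_erase_add Finset.univ f (Finset.mem_univ m)
    have h3 : ∑ k ∈ Finset.univ.erase m, f k = 0 :=
      Finset.sum_eq_zero fun k hk => hz k (Finset.mem_erase.1 hk).1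
    rw [h3, zero_add, hfsum] at h2
    exact h2
  refine ⟨⟨hfm, hz⟩, ?_⟩
  funext k
  by_cases hk : k = m
  · subst hk; rw [hfm, hoptm]
  · rw [hz k hk, hoptz k hk]
end

section
/- Every oligopoly pricing game possesses a monopolistic equilibrium: there exist a pricing profile (B_i) and a relay m with ∫_0^{R_s} λ_m(r) dr = min_j ∫_0^{R_s} λ_j(r) dr such that (B_i) together with the routing assigning all of R_s to relay m and 0 to every other relay is an equilibrium. -/
open Finset MeasureTheory intervalIntegral Set

/-- Every oligopoly pricing game possesses a monopolistic equilibrium whose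
dominant relay has the minimum total marginal cost. -/
theorem monopolistic_equilibrium_exists
    (N : ℕ) (Rs : ℝ) (lam : Fin N → ℝ → ℝ)
    (holig : IsOligopoly N Rs lam) :
    ∃ (B : Fin N → ℝ → ℝ) (m : Fin N),
      (∀ j, (∫ r in (0:ℝ)..Rs, lam m r) ≤ ∫ r in (0:ℝ)..Rs, lam j r) ∧
      IsEquilibrium N Rs lam B (fun i => if i = m then Rs else 0) := by
  obtain ⟨hN, hRs, hlam⟩ := holig
  have hNpos : 0 < N := by omega
  have hne : (Finset.univ : Finset (Fin N)).Nonempty := ⟨⟨0, hNpos⟩, Finset.mem_univ _⟩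
  obtain ⟨m, -, hm⟩ := Finset.exists_min_image Finset.univ
    (fun j => ∫ r in (0:ℝ)..Rs, lam j r) hne
  have hm' : ∀ j, (∫ r in (0:ℝ)..Rs, lam m r) ≤ ∫ r in (0:ℝ)..Rs, lam j r :=
    fun j => hm j (Finset.mem_univ j)
  set V : ℝ := ∫ r in (0:ℝ)..Rs, lam m r with hVdef
  have hInt : ∀ j, ∀ a ∈ Set.Icc (0:ℝ) Rs, ∀ b ∈ Set.Icc (0:ℝ) Rs,
      IntervalIntegrable (lam j) MeasureTheory.volume a b := fun j a ha b hb =>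
    ((hlam j).2.1.mono (Set.uIcc_subset_Icc ha hb)).intervalIntegrable
  have hintnn : ∀ j, ∀ t ∈ Set.Icc (0:ℝ) Rs, 0 ≤ ∫ r in (0:ℝ)..t, lam j r := by
    intro j t ht
    exact intervalIntegral.integral_nonneg ht.1
      (fun r hr => ((hlam j).1 r ⟨hr.1, hr.2.trans ht.2⟩).le)
  have hV0 : 0 ≤ V := hintnn m Rs ⟨hRs.le, le_rfl⟩
  set K : ℝ := Finset.univ.sup' hne (fun j => lam j Rs) with hKdef
  have hKj : ∀ j, lam j Rs ≤ K := fun j => Finset.le_sup' (fun j => lam j Rs) (Finset.mem_univ j)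
  have hKpos : 0 < K :=
    lt_of_lt_of_le ((hlam m).1 Rs ⟨hRs.le, le_rfl⟩) (hKj m)
  set M : ℝ := V / Rs + K with hMdef
  have hM0 : 0 ≤ M := by positivity
  have hMj : ∀ j, lam j Rs ≤ M := fun j => le_trans (hKj j) (by
    rw [hMdef]
    have : 0 ≤ V / Rs := by positivity
    linarith)
  have hMRs : V ≤ M * Rs := by
    rw [← div_le_iff₀ hRs]
    linarith
  set F : ℝ → ℝ := fun t => min (M * t) V with hFdef
  have hF0 : F 0 = 0 := by
    show min (M * 0) V = 0
    rw [mul_zero, min_eq_left hV0]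
  have hFRs : F Rs = V := min_eq_right hMRs
  have hFnn : ∀ t, 0 ≤ t → 0 ≤ F t := fun t ht => le_min (mul_nonneg hM0 ht) hV0
  have hFmono : Monotone F := fun a b hab =>
    min_le_min (mul_le_mul_of_nonneg_left hab hM0) le_rfl
  have hFcont : Continuous F := (continuous_const.mul continuous_id).min continuous_const
  -- finite subadditivity
  have hsub : ∀ (s : Finset (Fin N)) (g : Fin N → ℝ), (∀ j, 0 ≤ g j) →
      F (∑ j ∈ s, g j) ≤ ∑ j ∈ s, F (g j) := by
    intro s g hg
    by_cases h : ∃ j ∈ s, V ≤ M * g j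
    · obtain ⟨j, hj, hVj⟩ := h
      calc F (∑ j ∈ s, g j) ≤ V := min_le_right _ _
        _ = F (g j) := (min_eq_right hVj).symm
        _ ≤ ∑ j ∈ s, F (g j) := Finset.single_le_sum (fun k _ => hFnn _ (hg k)) hj
    · push_neg at h
      calc F (∑ j ∈ s, g j) ≤ M * ∑ j ∈ s, g j := min_le_left _ _
        _ = ∑ j ∈ s, M * g j := Finset.mul_sum _ _ _
        _ = ∑ j ∈ s, F (g j) := Finset.sum_congr rfl
            (fun j hj => (min_eq_left (h j hj).le).symm)
  -- two-term subadditivity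
  have hsub2 : ∀ a b : ℝ, 0 ≤ a → 0 ≤ b → F (a + b) ≤ F a + F b := by
    intro a b ha hb
    rcases le_total V (M * a) with h | h
    · calc F (a + b) ≤ V := min_le_right _ _
        _ = F a := (min_eq_right h).symm
        _ ≤ F a + F b := le_add_of_nonneg_right (hFnn b hb)
    · rcases le_total V (M * b) with h2 | h2
      · calc F (a + b) ≤ V := min_le_right _ _
          _ = F b := (min_eq_right h2).symm
          _ ≤ F a + F b := le_add_of_nonneg_left (hFnn a ha)
      · calc F (a + b) ≤ M * (a + b) := min_le_left _ _
          _ = M * a + M * b := mul_add _ _ _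
          _ = F a + F b := by simp only [hFdef]; rw [min_eq_left h, min_eq_left h2]
  -- Bhat computed
  have hBhat : ∀ (i : Fin N) (t : ℝ), 0 ≤ t → Bhat N (fun _ => F) i t = F t := by
    intro i t ht
    have hcard : (Finset.univ.erase i).Nonempty := by
      apply Finset.card_pos.mp
      rw [Finset.card_erase_of_mem (Finset.mem_univ i), Finset.card_univ, Fintype.card_fin]
      omega
    obtain ⟨j0, hj0⟩ := hcard
    have hmem : F t ∈ {c : ℝ | ∃ g : Fin N → ℝ, (∀ j, 0 ≤ g j) ∧
        (∑ j ∈ Finset.univ.erase i, g j) = t ∧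
        c = ∑ j ∈ Finset.univ.erase i, (fun _ => F) j (g j)} := by
      refine ⟨fun j => if j = j0 then t else 0, fun j => by by_cases hj : j = j0 <;> simp [hj, ht], ?_, ?_⟩
      · rw [Finset.sum_ite_eq' _ j0, if_pos hj0]
      · have heach : ∀ j, F (if j = j0 then t else 0) = if j = j0 then F t else 0 := by
          intro j; split <;> simp [hF0]
        simp only [heach]
        rw [Finset.sum_ite_eq' _ j0, if_pos hj0]
    have hlb : ∀ c ∈ {c : ℝ | ∃ g : Fin N → ℝ, (∀ j, 0 ≤ g j) ∧
        (∑ j ∈ Finset.univ.erase i, g j) = t ∧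
        c = ∑ j ∈ Finset.univ.erase i, (fun _ => F) j (g j)}, F t ≤ c := by
      rintro c ⟨g, hg0, hgsum, rfl⟩
      rw [← hgsum]
      exact hsub _ _ hg0
    exact le_antisymm (csInf_le ⟨F t, hlb⟩ hmem) (le_csInf ⟨F t, hmem⟩ hlb)
  -- key inequality
  have key : ∀ j, ∀ t ∈ Set.Icc (0:ℝ) Rs, V - F (Rs - t) ≤ ∫ r in (0:ℝ)..t, lam j r := by
    intro j t ht
    obtain ⟨ht0, htR⟩ := ht
    have h1 : 0 ≤ ∫ r in (0:ℝ)..t, lam j r := hintnn j t ⟨ht0, htR⟩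
    rcases le_total V (M * (Rs - t)) with hc | hc
    · have : F (Rs - t) = V := min_eq_right hc
      linarith
    · have hFeq : F (Rs - t) = M * (Rs - t) := min_eq_left hc
      have hsplit : (∫ r in (0:ℝ)..t, lam j r) + ∫ r in t..Rs, lam j r
          = ∫ r in (0:ℝ)..Rs, lam j r :=
        intervalIntegral.integral_add_adjacent_intervals
          (hInt j 0 ⟨le_rfl, hRs.le⟩ t ⟨ht0, htR⟩)
          (hInt j t ⟨ht0, htR⟩ Rs ⟨hRs.le, le_rfl⟩)
      have hub : (∫ r in t..Rs, lam j r) ≤ lam j Rs * (Rs - t) := by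
        have hmono : ∀ x ∈ Set.Icc t Rs, lam j x ≤ lam j Rs := fun x hx =>
          ((hlam j).2.2.monotoneOn) ⟨ht0.trans hx.1, hx.2⟩ ⟨hRs.le, le_rfl⟩ hx.2
        have := intervalIntegral.integral_mono_on htR
          (hInt j t ⟨ht0, htR⟩ Rs ⟨hRs.le, le_rfl⟩)
          (_root_.intervalIntegrable_const (c := lam j Rs)) hmono
        simpa [intervalIntegral.integral_const, smul_eq_mul, mul_comm] using this
      have hVj : V ≤ ∫ r in (0:ℝ)..Rs, lam j r := hm' j
      have hMge : lam j Rs * (Rs - t) ≤ M * (Rs - t) :=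
        mul_le_mul_of_nonneg_right (hMj j) (by linarith)
      linarith
  refine ⟨fun _ => F, m, hm', ?_, ?_, ?_, ?_, ?_, ?_⟩
  · -- pricing profile
    exact fun i => ⟨hFcont.continuousOn, hFmono.monotoneOn _, hF0⟩
  · -- routing
    refine ⟨fun i => by dsimp only; split <;> simp [hRs.le], ?_⟩
    rw [Finset.sum_ite_eq' Finset.univ m (fun _ => Rs), if_pos (Finset.mem_univ m)]
  · -- cost minimality
    intro g hg
    have hfsum : (∑ i, F (if i = m then Rs else 0)) = V := by
      have heach : ∀ i, F (if i = m then Rs else 0) = if i = m then V else 0 := by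
        intro i; split <;> simp [hF0, hFRs]
      simp only [heach]
      rw [Finset.sum_ite_eq' Finset.univ m (fun _ => V), if_pos (Finset.mem_univ m)]
    calc (∑ i, F (if i = m then Rs else 0)) = V := hfsum
      _ = F Rs := hFRs.symm
      _ = F (∑ i, g i) := by rw [hg.2]
      _ ≤ ∑ i, F (g i) := hsub _ _ hg.1
  · -- condition (iv)
    intro i t ht
    rw [hBhat i Rs hRs.le, hBhat i (Rs - t) (by linarith [ht.2])]
    have := hsub2 t (Rs - t) ht.1 (by linarith [ht.2])
    rw [add_sub_cancel] at this
    linarith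
  · -- condition (v)
    intro i
    by_cases hi : i = m
    · simp only [if_pos hi]
      rw [hBhat i Rs hRs.le, sub_self, hBhat i 0 le_rfl, hF0, sub_zero]
    · simp only [if_neg hi]
      rw [hF0, sub_zero, hBhat i Rs hRs.le, sub_self]
  · -- condition (vi)
    intro i t ht
    rw [hBhat i Rs hRs.le, hBhat i (Rs - t) (by linarith [ht.2])]
    by_cases hi : i = m
    · subst hi
      dsimp only
      rw [if_pos rfl, sub_self, hBhat i 0 le_rfl, hF0, hFRs]
      have hk := key i t ht
      linarith [hVdef.le, hVdef.ge]
    · simp only [if_neg hi]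
      rw [sub_zero, hBhat i Rs hRs.le, intervalIntegral.integral_same, hFRs]
      have hk := key i t ht
      linarith
end

section
/- If the socially optimal routing of an oligopoly pricing game is competitive (it assigns positive flow to at least two relays), then the game has an inefficient equilibrium: there exists an equilibrium (in fact a monopolistic one) whose induced routing is not the socially optimal routing. -/
open Finset MeasureTheory intervalIntegral Set

/-!
Fix a relay `m` whose cost `P = Λ_m(Rs)` of carrying all the traffic is minimal, where
`Λ_i(t) = ∫₀ᵗ λ_i`, and let every relay post the same price `φ x = min (C x) P`, with `C` a
bound for all marginal costs. Since `φ` is subadditive and vanishes at `0`, the virtual competitor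
of every relay prices like `φ` itself, so routing everything through `m` is optimal for the
prices. Every relay then earns zero profit, and taking `t` units instead would earn
`P - φ (Rs - t) - Λ_i(t) ≤ 0`, because `Λ_i(t) ≥ 0` and
`Λ_i(t) ≥ Λ_i(Rs) - C (Rs - t) ≥ P - C (Rs - t)`.
This monopolistic equilibrium differs from any competitive routing.
-/

lemma min_add_le_min_add_min {α : Type*} [AddCommMonoid α] [LinearOrder α] [IsOrderedAddMonoid α]
    {x y P : α} (hx : 0 ≤ x) (hy : 0 ≤ y) (hP : 0 ≤ P) :
    min (x + y) P ≤ min x P + min y P := by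
  rcases le_total x P with hxP | hPx
  · rcases le_total y P with hyP | hPy
    · rw [min_eq_left hxP, min_eq_left hyP]
      exact min_le_left _ _
    · rw [min_eq_right hPy]
      exact (min_le_right _ _).trans (le_add_of_nonneg_left (le_min hx hP))
  · rw [min_eq_right hPx]
    exact (min_le_right _ _).trans (le_add_of_nonneg_right (le_min hy hP))

lemma integral_le_integral_add_mul {f : ℝ → ℝ} {a t b C : ℝ} (hat : a ≤ t) (htb : t ≤ b)
    (hf : ContinuousOn f (Icc a b)) (hC : ∀ x ∈ Icc a b, |f x| ≤ C) :
    ∫ x in a..b, f x ≤ (∫ x in a..t, f x) + C * (b - t) := by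
  rw [← integral_add_adjacent_intervals
    ((hf.mono (Icc_subset_Icc_right htb)).intervalIntegrable_of_Icc hat)
    ((hf.mono (Icc_subset_Icc_left hat)).intervalIntegrable_of_Icc htb)]
  gcongr
  calc ∫ x in t..b, f x ≤ ‖∫ x in t..b, f x‖ := le_abs_self _
    _ ≤ C * |b - t| := norm_integral_le_of_norm_le_const fun x hx =>
        hC x ⟨hat.trans (uIoc_of_le htb ▸ hx).1.le, (uIoc_of_le htb ▸ hx).2⟩
    _ = C * (b - t) := by rw [abs_of_nonneg (sub_nonneg.2 htb)]

lemma Bhat_const_eq {N : ℕ} (hN : 2 ≤ N) {φ : ℝ → ℝ} (h0 : φ 0 = 0)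
    (hadd : ∀ x y, 0 ≤ x → 0 ≤ y → φ (x + y) ≤ φ x + φ y) (i : Fin N) {t : ℝ} (ht : 0 ≤ t) :
    Bhat N (fun _ => φ) i t = φ t := by
  obtain ⟨j, hj⟩ : (univ.erase i).Nonempty := by
    rw [← card_pos, card_erase_of_mem (mem_univ i), card_univ, Fintype.card_fin]
    omega
  have hsingle : 0 ≤ (Pi.single j t : Fin N → ℝ) := Pi.single_nonneg.2 ht
  refine IsLeast.csInf_eq ⟨⟨Pi.single j t, hsingle, ?_, ?_⟩, ?_⟩
  · rw [sum_pi_single', if_pos hj]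
  · rw [sum_eq_single j (fun k _ hk => by simp [Pi.single_eq_of_ne hk, h0]) (absurd hj),
      Pi.single_eq_same]
  · rintro c ⟨g, hg, rfl, rfl⟩
    exact le_sum_of_subadditive_on_pred φ (0 ≤ ·) h0.le hadd (fun _ _ => add_nonneg) g
      fun k _ => hg k

def cappedPrice (C P x : ℝ) : ℝ := min (C * x) P

section cappedPrice

variable {C P : ℝ}

lemma cappedPrice_zero (hP : 0 ≤ P) : cappedPrice C P 0 = 0 := by
  rw [cappedPrice, mul_zero, min_eq_left hP]

lemma cappedPrice_of_le {x : ℝ} (h : P ≤ C * x) : cappedPrice C P x = P := min_eq_right h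

lemma cappedPrice_add_le (hC : 0 ≤ C) (hP : 0 ≤ P) (x y : ℝ) (hx : 0 ≤ x) (hy : 0 ≤ y) :
    cappedPrice C P (x + y) ≤ cappedPrice C P x + cappedPrice C P y := by
  rw [cappedPrice, mul_add]
  exact min_add_le_min_add_min (mul_nonneg hC hx) (mul_nonneg hC hy) hP

lemma monotone_cappedPrice (hC : 0 ≤ C) : Monotone (cappedPrice C P) :=
  fun _ _ hxy => min_le_min_right P (mul_le_mul_of_nonneg_left hxy hC)

lemma continuous_cappedPrice : Continuous (cappedPrice C P) := by
  unfold cappedPrice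
  fun_prop

lemma le_cappedPrice_add_integral {f : ℝ → ℝ} {a t b : ℝ} (ht : t ∈ Icc a b)
    (hf : ContinuousOn f (Icc a b)) (hf0 : ∀ x ∈ Icc a b, 0 ≤ f x) (hfC : ∀ x ∈ Icc a b, f x ≤ C)
    (hPf : P ≤ ∫ x in a..b, f x) :
    P ≤ cappedPrice C P (b - t) + ∫ x in a..t, f x := by
  rcases le_total (C * (b - t)) P with h | h
  · rw [cappedPrice, min_eq_left h]
    have := integral_le_integral_add_mul ht.1 ht.2 hf fun x hx =>
      abs_le.2 ⟨by linarith [hf0 x hx, hfC x hx], hfC x hx⟩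
    linarith
  · rw [cappedPrice_of_le h, le_add_iff_nonneg_right]
    exact intervalIntegral.integral_nonneg ht.1 fun x hx => hf0 x ⟨hx.1, hx.2.trans ht.2⟩

end cappedPrice

lemma isRouting_single {N : ℕ} {Rs : ℝ} (hRs : 0 ≤ Rs) (m : Fin N) :
    IsRouting N Rs (Pi.single m Rs) :=
  ⟨(Pi.single_nonneg.2 hRs : 0 ≤ (Pi.single m Rs : Fin N → ℝ)), by simp⟩

theorem isEquilibrium_cappedPrice_single {N : ℕ} {Rs C : ℝ} {lam : Fin N → ℝ → ℝ}
    (hN : 2 ≤ N) (hRs : 0 ≤ Rs) (hcont : ∀ i, ContinuousOn (lam i) (Icc 0 Rs))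
    (hnonneg : ∀ i, ∀ t ∈ Icc 0 Rs, 0 ≤ lam i t) (hle : ∀ i, ∀ t ∈ Icc 0 Rs, lam i t ≤ C)
    {m : Fin N} (hm : ∀ i, ∫ r in (0:ℝ)..Rs, lam m r ≤ ∫ r in (0:ℝ)..Rs, lam i r) :
    IsEquilibrium N Rs lam (fun _ => cappedPrice C (∫ r in (0:ℝ)..Rs, lam m r))
      (Pi.single m Rs) := by
  set P := ∫ r in (0:ℝ)..Rs, lam m r
  set φ := cappedPrice C P
  have hRs_mem : Rs ∈ Icc 0 Rs := ⟨hRs, le_rfl⟩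
  have hC : 0 ≤ C := (hnonneg m Rs hRs_mem).trans (hle m Rs hRs_mem)
  have hP : 0 ≤ P := intervalIntegral.integral_nonneg hRs (hnonneg m)
  have hφ0 : φ 0 = 0 := cappedPrice_zero hP
  have hφRs : φ Rs = P := le_antisymm (min_le_right _ _) (by
    simpa using le_cappedPrice_add_integral ⟨le_rfl, hRs⟩ (hcont m) (hnonneg m) (hle m) le_rfl)
  have hφadd := cappedPrice_add_le hC hP
  have hBhat : ∀ i t, 0 ≤ t → Bhat N (fun _ => φ) i t = φ t :=
    fun i _ ht => Bhat_const_eq hN hφ0 hφadd i ht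
  set f : Fin N → ℝ := Pi.single m Rs
  have hf_mem : ∀ i, f i ∈ Icc 0 Rs := fun i => by
    rcases eq_or_ne i m with rfl | hi <;> simp [f, *]
  have hprice : ∀ i, φ (f i) + φ (Rs - f i) = P := fun i => by
    rcases eq_or_ne i m with rfl | hi <;> simp [f, *]
  have hcost : ∀ i, φ (Rs - f i) + ∫ r in (0:ℝ)..(f i), lam i r = P := fun i => by
    rcases eq_or_ne i m with rfl | hi <;> simp [f, P, *]
  refine ⟨fun _ => ⟨continuous_cappedPrice.continuousOn, (monotone_cappedPrice hC).monotoneOn _,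
    hφ0⟩, isRouting_single hRs m, fun g hg => ?_, fun i t ht => ?_, fun i => ?_, fun i t ht => ?_⟩
  · calc ∑ i, φ (f i) = φ (∑ i, g i) := by
          rw [sum_eq_single m (fun k _ hk => by simp [f, hk, hφ0]) (by simp), hg.2]
          simp [f]
      _ ≤ ∑ i, φ (g i) :=
          le_sum_of_subadditive_on_pred φ (0 ≤ ·) hφ0.le hφadd (fun _ _ => add_nonneg) g
            fun k _ => hg.1 k
  · rw [hBhat i _ hRs, hBhat i _ (sub_nonneg.2 ht.2), sub_le_iff_le_add]
    simpa [add_comm] using hφadd (Rs - t) t (sub_nonneg.2 ht.2) ht.1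
  · rw [hBhat i _ hRs, hBhat i _ (sub_nonneg.2 (hf_mem i).2)]
    linarith [hprice i]
  · rw [hBhat i _ hRs, hBhat i _ (sub_nonneg.2 ht.2), hBhat i _ (sub_nonneg.2 (hf_mem i).2)]
    have := le_cappedPrice_add_integral ht (hcont i) (hnonneg i) (hle i) (hm i)
    linarith [hcost i]

theorem inefficient_equilibrium_exists_general
    (N : ℕ) (Rs : ℝ) (lam : Fin N → ℝ → ℝ) (ropt : Fin N → ℝ)
    (holig : IsOligopoly N Rs lam)
    (hcompetitive : ∃ i j, i ≠ j ∧ 0 < ropt i ∧ 0 < ropt j) :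
    ∃ (B : Fin N → ℝ → ℝ) (f : Fin N → ℝ) (m : Fin N),
      IsEquilibrium N Rs lam B f ∧ f m = Rs ∧ f ≠ ropt := by
  obtain ⟨hN, hRs, hlam⟩ := holig
  obtain ⟨m, -, hm⟩ := exists_min_image univ (fun i => ∫ r in (0:ℝ)..Rs, lam i r)
    ⟨⟨0, by omega⟩, mem_univ _⟩
  have hRs_mem : Rs ∈ Icc 0 Rs := ⟨hRs.le, le_rfl⟩
  have hle : ∀ i, ∀ t ∈ Icc 0 Rs, lam i t ≤ ∑ j, lam j Rs := fun i t ht =>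
    ((hlam i).2.2.monotoneOn ht hRs_mem ht.2).trans
      (single_le_sum (fun j _ => ((hlam j).1 Rs hRs_mem).le) (mem_univ i))
  refine ⟨_, _, m, isEquilibrium_cappedPrice_single hN hRs.le (fun i => (hlam i).2.1)
    (fun i t ht => ((hlam i).1 t ht).le) hle fun i => hm i (mem_univ i), by simp, ?_⟩
  rintro rfl
  obtain ⟨i, j, hij, hi, hj⟩ := hcompetitive
  rcases eq_or_ne i m with rfl | him
  · simp [hij.symm] at hj
  · simp [him] at hi

/-- If the socially optimal routing is competitive, then there exists an
inefficient (in fact monopolistic) equilibrium. -/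
theorem inefficient_equilibrium_exists
    (N : ℕ) (Rs : ℝ) (lam : Fin N → ℝ → ℝ) (ropt : Fin N → ℝ)
    (holig : IsOligopoly N Rs lam)
    (hopt : IsSociallyOptimal N Rs lam ropt)
    (hcompetitive : ∃ i j, i ≠ j ∧ 0 < ropt i ∧ 0 < ropt j) :
    ∃ (B : Fin N → ℝ → ℝ) (f : Fin N → ℝ) (m : Fin N),
      IsEquilibrium N Rs lam B f ∧ f m = Rs ∧ f ≠ ropt :=
  inefficient_equilibrium_exists_general N Rs lam ropt holig hcompetitive
end

section
/- Suppose in an oligopoly pricing game every marginal cost function λ_i is in addition concave on [0,R_s]. Then the price of anarchy is at most N: for every equilibrium ((B_i),(f_i^*)), the induced cost satisfies ∑_i ∫_0^{f_i^*} λ_i(r) dr ≤ N · ∑_i ∫_0^{r_i^*} λ_i(r) dr, where (r_i^*) is the socially optimal routing. -/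
open Finset MeasureTheory intervalIntegral Set

/-- Auxiliary: for a nonneg-at-0, monotone, concave function on `[0,Rs]`,
`∫₀ˣ λ ≥ (x/Rs)² ∫₀^Rs λ`. -/
lemma concave_int_bound (Rs : ℝ) (lam : ℝ → ℝ) (hRs : 0 < Rs)
    (hconc : ConcaveOn ℝ (Set.Icc 0 Rs) lam)
    (hmono : MonotoneOn lam (Set.Icc 0 Rs))
    (h0 : 0 ≤ lam 0)
    (x : ℝ) (hx : x ∈ Set.Icc (0:ℝ) Rs) :
    (x / Rs)^2 * (∫ r in (0:ℝ)..Rs, lam r) ≤ ∫ r in (0:ℝ)..x, lam r := by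
  rcases eq_or_lt_of_le hx.1 with h | hxpos
  · simp [← h]
  · set c : ℝ := x / Rs with hc
    have hc0 : 0 < c := div_pos hxpos hRs
    have hc1 : c ≤ 1 := (div_le_one hRs).mpr hx.2
    have hcRs : c * Rs = x := div_mul_cancel₀ x hRs.ne'
    have hmem : ∀ u ∈ Set.Icc (0:ℝ) Rs, c * u ∈ Set.Icc (0:ℝ) Rs := by
      intro u hu
      constructor
      · exact mul_nonneg hc0.le hu.1
      · calc c * u ≤ 1 * u := by nlinarith [hu.1]
          _ ≤ Rs := by linarith [hu.2]
    have hmono2 : MonotoneOn (fun u => lam (c * u)) (Set.Icc (0:ℝ) Rs) := by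
      intro u hu v hv huv
      exact hmono (hmem u hu) (hmem v hv) (by nlinarith)
    have huIcc : Set.uIcc (0:ℝ) Rs = Set.Icc (0:ℝ) Rs := Set.uIcc_of_le hRs.le
    have hint1 : IntervalIntegrable (fun u => lam (c * u)) volume 0 Rs := by
      apply MonotoneOn.intervalIntegrable; rwa [huIcc]
    have hint2 : IntervalIntegrable lam volume 0 Rs := by
      apply MonotoneOn.intervalIntegrable; rwa [huIcc]
    have hint3 : IntervalIntegrable (fun u => c * lam u) volume 0 Rs := hint2.const_mul c
    have hpt : ∀ u ∈ Set.Icc (0:ℝ) Rs, c * lam u ≤ lam (c * u) := by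
      intro u hu
      have h00 : (0:ℝ) ∈ Set.Icc (0:ℝ) Rs := ⟨le_refl 0, hRs.le⟩
      have := hconc.2 hu h00 hc0.le (by linarith : (0:ℝ) ≤ 1 - c) (by ring)
      simp only [smul_eq_mul, mul_zero, add_zero] at this
      nlinarith
    have hcmp : (∫ u in (0:ℝ)..Rs, c * lam u) ≤ ∫ u in (0:ℝ)..Rs, lam (c * u) :=
      intervalIntegral.integral_mono_on hRs.le hint3 hint1 hpt
    have hsub : (∫ u in (0:ℝ)..Rs, lam (c * u)) = c⁻¹ • ∫ u in (0:ℝ)..x, lam u := by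
      rw [intervalIntegral.integral_comp_mul_left lam hc0.ne', mul_zero, hcRs]
    rw [hsub, smul_eq_mul] at hcmp
    rw [intervalIntegral.integral_const_mul, inv_mul_eq_div, le_div_iff₀ hc0] at hcmp
    calc (x / Rs)^2 * (∫ r in (0:ℝ)..Rs, lam r)
          = c * (∫ u in (0:ℝ)..Rs, lam u) * c := by rw [hc]; ring
      _ ≤ ∫ r in (0:ℝ)..x, lam r := hcmp

/-- With concave marginal cost functions, the price of anarchy of an oligopoly
pricing game is at most the number of relays `N`. -/
theorem price_of_anarchy_concave
    (N : ℕ) (Rs : ℝ) (lam B : Fin N → ℝ → ℝ) (ropt f : Fin N → ℝ)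
    (holig : IsOligopoly N Rs lam)
    (hconcave : ∀ i, ConcaveOn ℝ (Set.Icc 0 Rs) (lam i))
    (hopt : IsSociallyOptimal N Rs lam ropt)
    (heq : IsEquilibrium N Rs lam B f)
    (hderivB : ∀ i, HasOneSidedDerivs Rs (B i))
    (hderivBhat : ∀ i, HasOneSidedDerivs Rs (Bhat N B i)) :
    totalCost N lam f ≤ N * totalCost N lam ropt := by
  obtain ⟨hN2, hRs, hlam⟩ := holig
  obtain ⟨hBprof, ⟨hfpos, hfsum⟩, hmin, _hiv, hv, hvi⟩ := heq
  obtain ⟨⟨hrpos, hrsum⟩, _hroptmin⟩ := hopt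
  -- basic facts
  have hfle : ∀ i, f i ≤ Rs := by
    intro i
    rw [← hfsum]
    exact Finset.single_le_sum (fun j _ => hfpos j) (Finset.mem_univ i)
  have hrle : ∀ i, ropt i ≤ Rs := by
    intro i
    rw [← hrsum]
    exact Finset.single_le_sum (fun j _ => hrpos j) (Finset.mem_univ i)
  -- profit nonnegativity: ∫₀^{f i} λ_i ≤ B i (f i)
  have hprofit : ∀ i, (∫ r in (0:ℝ)..(f i), lam i r) ≤ B i (f i) := by
    intro i
    have h := hvi i 0 ⟨le_refl 0, hRs.le⟩
    rw [intervalIntegral.integral_same, ← hv i] at h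
    simp only [sub_zero] at h
    linarith
  -- erase-sum identity for `f`
  have herasesum : ∀ k : Fin N, (∑ j ∈ Finset.univ.erase k, f j) = Rs - f k := by
    intro k
    have := Finset.add_sum_erase Finset.univ f (Finset.mem_univ k)
    rw [hfsum] at this
    linarith
  -- Bhat k 0 = 0
  have hBhat0 : ∀ k, Bhat N B k 0 ≤ 0 := by
    intro k
    have hmem0 : (0:ℝ) ∈ {c : ℝ | ∃ g : Fin N → ℝ, (∀ j, 0 ≤ g j) ∧
        (∑ j ∈ Finset.univ.erase k, g j) = 0 ∧ c = ∑ j ∈ Finset.univ.erase k, B j (g j)} := by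
      refine ⟨fun _ => 0, fun j => le_refl 0, by simp, ?_⟩
      symm
      exact Finset.sum_eq_zero (fun j _ => (hBprof j).2.2)
    have hbdd : BddBelow {c : ℝ | ∃ g : Fin N → ℝ, (∀ j, 0 ≤ g j) ∧
        (∑ j ∈ Finset.univ.erase k, g j) = 0 ∧ c = ∑ j ∈ Finset.univ.erase k, B j (g j)} := by
      refine ⟨0, fun c hc => ?_⟩
      obtain ⟨g, hg0, hgsum, rfl⟩ := hc
      have hz : ∀ j ∈ Finset.univ.erase k, g j = 0 :=
        (Finset.sum_eq_zero_iff_of_nonneg (fun j _ => hg0 j)).mp hgsum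
      have : (∑ j ∈ Finset.univ.erase k, B j (g j)) = 0 := by
        apply Finset.sum_eq_zero
        intro j hj
        rw [hz j hj]
        exact (hBprof j).2.2
      rw [this]
    exact csInf_le hbdd hmem0
  -- lower bound on Bhat k (Rs - f k)
  have hBhatlow : ∀ k, (∑ j ∈ Finset.univ.erase k, ∫ r in (0:ℝ)..(f j), lam j r)
      ≤ Bhat N B k (Rs - f k) := by
    intro k
    apply le_csInf
    · exact ⟨∑ j ∈ Finset.univ.erase k, B j (f j), f, hfpos, herasesum k, rfl⟩
    · rintro b ⟨g, hg0, hgsum, rfl⟩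
      have hstep : (∑ j ∈ Finset.univ.erase k, B j (f j)) ≤
          ∑ j ∈ Finset.univ.erase k, B j (g j) := by
        have hrout : IsRouting N Rs (Function.update g k (f k)) := by
          constructor
          · intro j
            rcases eq_or_ne j k with rfl | hj
            · rw [Function.update_self]; exact hfpos j
            · rw [Function.update_of_ne hj]; exact hg0 j
          · rw [← Finset.add_sum_erase Finset.univ _ (Finset.mem_univ k),
              Function.update_self]
            have : (∑ j ∈ Finset.univ.erase k, Function.update g k (f k) j)
                = ∑ j ∈ Finset.univ.erase k, g j := by
              apply Finset.sum_congr rfl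
              intro j hj
              rw [Function.update_of_ne (Finset.ne_of_mem_erase hj)]
            rw [this, hgsum]
            ring
        have h1 := hmin _ hrout
        rw [← Finset.add_sum_erase Finset.univ (fun i => B i (f i)) (Finset.mem_univ k),
          ← Finset.add_sum_erase Finset.univ (fun i => B i (Function.update g k (f k) i))
            (Finset.mem_univ k), Function.update_self] at h1
        have h2 : (∑ j ∈ Finset.univ.erase k, B j (Function.update g k (f k) j))
            = ∑ j ∈ Finset.univ.erase k, B j (g j) := by
          apply Finset.sum_congr rfl
          intro j hj
          rw [Function.update_of_ne (Finset.ne_of_mem_erase hj)]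
        rw [h2] at h1
        linarith
      refine le_trans ?_ hstep
      exact Finset.sum_le_sum (fun j _ => hprofit j)
  -- key: totalCost f ≤ ∫₀^Rs λ_k for every k
  have hkey : ∀ k, totalCost N lam f ≤ ∫ r in (0:ℝ)..Rs, lam k r := by
    intro k
    have h := hvi k Rs ⟨hRs.le, le_refl Rs⟩
    rw [sub_self] at h
    have h0 := hBhat0 k
    have hlow := hBhatlow k
    have hTC : totalCost N lam f = (∫ r in (0:ℝ)..(f k), lam k r)
        + ∑ j ∈ Finset.univ.erase k, ∫ r in (0:ℝ)..(f j), lam j r := by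
      rw [totalCost, ← Finset.add_sum_erase Finset.univ _ (Finset.mem_univ k)]
    rw [hTC]
    linarith
  -- nonnegativity of totalCost f
  have hC0 : 0 ≤ totalCost N lam f := by
    apply Finset.sum_nonneg
    intro i _
    apply intervalIntegral.integral_nonneg (hfpos i)
    intro u hu
    exact (hlam i).1 u ⟨hu.1, le_trans hu.2 (hfle i)⟩ |>.le
  -- concavity bound per relay
  have hterm : ∀ i, (ropt i / Rs)^2 * totalCost N lam f
      ≤ ∫ r in (0:ℝ)..(ropt i), lam i r := by
    intro i
    have h1 : (ropt i / Rs)^2 * totalCost N lam f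
        ≤ (ropt i / Rs)^2 * ∫ r in (0:ℝ)..Rs, lam i r :=
      mul_le_mul_of_nonneg_left (hkey i) (sq_nonneg _)
    refine le_trans h1 ?_
    exact concave_int_bound Rs (lam i) hRs (hconcave i)
      ((hlam i).2.2.monotoneOn) ((hlam i).1 0 ⟨le_refl 0, hRs.le⟩).le
      (ropt i) ⟨hrpos i, hrle i⟩
  -- Cauchy-Schwarz: 1 ≤ N * ∑ (ropt i / Rs)^2
  have hCS : (1:ℝ) ≤ (N:ℝ) * ∑ i, (ropt i / Rs)^2 := by
    have h1 : (∑ i, ropt i / Rs) = 1 := by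
      rw [← Finset.sum_div, hrsum, div_self hRs.ne']
    have h2 := sq_sum_le_card_mul_sum_sq (s := Finset.univ)
      (f := fun i => ropt i / Rs)
    rw [h1] at h2
    simpa using h2
  -- conclude
  calc totalCost N lam f = 1 * totalCost N lam f := (one_mul _).symm
    _ ≤ ((N:ℝ) * ∑ i, (ropt i / Rs)^2) * totalCost N lam f :=
        mul_le_mul_of_nonneg_right hCS hC0
    _ = (N:ℝ) * ∑ i, (ropt i / Rs)^2 * totalCost N lam f := by
        rw [mul_assoc, Finset.sum_mul]
    _ ≤ (N:ℝ) * ∑ i, ∫ r in (0:ℝ)..(ropt i), lam i r := by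
        apply mul_le_mul_of_nonneg_left _ (Nat.cast_nonneg N)
        exact Finset.sum_le_sum (fun i _ => hterm i)
    _ = N * totalCost N lam ropt := rfl
end

section
/- Let R > 0 and let λ : [0,R] → ℝ be continuous and concave with λ(0) ≥ 0. Then for every α ∈ [0,1], ∫_0^{αR} λ(r) dr ≥ α² ∫_0^{R} λ(r) dr; moreover equality holds for every α ∈ [0,1] if λ is linear with λ(0) = 0. -/
open Finset MeasureTheory intervalIntegral Set

/-- For a continuous concave `λ` on `[0,R]` with `λ(0) ≥ 0`,
`∫_0^{αR} λ ≥ α² ∫_0^R λ` for every `α ∈ [0,1]`, with equality for every `α`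
when `λ` is linear with `λ(0) = 0`. -/
theorem concave_integral_scaling
    (R : ℝ) (hR : 0 < R) (lam : ℝ → ℝ)
    (hcont : ContinuousOn lam (Set.Icc 0 R))
    (hconcave : ConcaveOn ℝ (Set.Icc 0 R) lam)
    (h0 : 0 ≤ lam 0) :
    (∀ α ∈ Set.Icc (0:ℝ) 1,
      α ^ 2 * (∫ r in (0:ℝ)..R, lam r) ≤ ∫ r in (0:ℝ)..(α * R), lam r) ∧
    (∀ a : ℝ, (∀ x, lam x = a * x) →
      ∀ α ∈ Set.Icc (0:ℝ) 1,
        (∫ r in (0:ℝ)..(α * R), lam r) = α ^ 2 * ∫ r in (0:ℝ)..R, lam r) := by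
  constructor
  · rintro α ⟨hα0, hα1⟩
    rcases eq_or_lt_of_le hα0 with rfl | hαpos
    · simp
    -- substitution: ∫_0^{αR} lam = α • ∫_0^R lam (α s)
    have hsub : (α • ∫ s in (0:ℝ)..R, lam (α * s)) = ∫ r in (0:ℝ)..(α * R), lam r := by
      simpa using intervalIntegral.smul_integral_comp_mul_left lam α (a := 0) (b := R)
    rw [← hsub]
    have hmaps : ∀ s ∈ Set.Icc (0:ℝ) R, α * s ∈ Set.Icc (0:ℝ) R := by
      intro s hs
      constructor
      · exact mul_nonneg hαpos.le hs.1
      · calc α * s ≤ 1 * R := by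
              apply mul_le_mul hα1 hs.2 hs.1 zero_le_one
            _ = R := one_mul R
    have hint1 : IntervalIntegrable (fun s => lam (α * s)) volume 0 R :=
      ContinuousOn.intervalIntegrable (by
        rw [Set.uIcc_of_le hR.le]; exact hcont.comp (by fun_prop) hmaps)
    have hint2 : IntervalIntegrable (fun s => α * lam s) volume 0 R :=
      ContinuousOn.intervalIntegrable (by
        rw [Set.uIcc_of_le hR.le]; exact fun x hx => ((hcont x hx).const_smul α))
    have hmono : (∫ s in (0:ℝ)..R, α * lam s) ≤ ∫ s in (0:ℝ)..R, lam (α * s) := by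
      apply intervalIntegral.integral_mono_on hR.le hint2 hint1
      intro s hs
      have h1 : lam (α * s) = lam (α • s + (1 - α) • (0:ℝ)) := by
        simp [smul_eq_mul]
      have := hconcave.2 hs (Set.left_mem_Icc.2 hR.le) hαpos.le
        (by linarith : (0:ℝ) ≤ 1 - α) (by ring)
      rw [h1]
      calc α * lam s ≤ α * lam s + (1 - α) * lam 0 := by
            nlinarith
        _ = α • lam s + (1 - α) • lam 0 := by simp [smul_eq_mul]
        _ ≤ lam (α • s + (1 - α) • (0:ℝ)) := this
    calc α ^ 2 * (∫ r in (0:ℝ)..R, lam r)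
        = α * ∫ s in (0:ℝ)..R, α * lam s := by
          rw [intervalIntegral.integral_const_mul]; ring
      _ ≤ α * ∫ s in (0:ℝ)..R, lam (α * s) := by
          exact mul_le_mul_of_nonneg_left hmono hαpos.le
      _ = α • ∫ s in (0:ℝ)..R, lam (α * s) := by simp [smul_eq_mul]
  · rintro a ha α ⟨hα0, hα1⟩
    simp only [ha]
    rw [intervalIntegral.integral_const_mul, intervalIntegral.integral_const_mul,
      integral_id, integral_id]
    ring
end

section
/- Consider the oligopoly pricing game with N ≥ 2 relays in which every relay has the same linear marginal cost λ_i(r) = a·r for a constant a > 0. Then: the socially optimal routing assigns R_s/N to each relay and has cost a·R_s²/(2N); and the pricing profile B_i(t) = a·R_s·t − a·t²/2 for every relay i, together with the monopolistic routing assigning all of R_s to relay 1, is an equilibrium whose cost is a·R_s²/2, i.e. exactly N times the socially optimal cost. -/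
open Finset MeasureTheory intervalIntegral Set

/-! With every relay charging `φ t = a Rs t − a t²/2`, a subadditive function on `[0, ∞)` (indeed
`φ (x + y) = φ x + φ y − a x y`), splitting traffic never lowers the total price, so the monopoly
routing minimises the payment and each virtual competitor prices exactly like `φ`. Then
`φ Rs − φ (Rs − t) = a t²/2 = ∫₀ᵗ a r dr`: every relay's profit against its virtual competitor
vanishes identically, so every flow, the monopoly one in particular, is a best response. The
optimal routing is the even split by Cauchy–Schwarz, `Rs² ≤ N ∑ gᵢ²`. -/

theorem integral_const_mul_id (a x : ℝ) : ∫ r in (0:ℝ)..x, a * r = a * x ^ 2 / 2 := by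
  rw [intervalIntegral.integral_const_mul, integral_id]
  ring

theorem totalCost_linear (N : ℕ) (a : ℝ) (f : Fin N → ℝ) :
    totalCost N (fun _ r => a * r) f = a / 2 * ∑ i, f i ^ 2 := by
  simp only [totalCost, integral_const_mul_id, Finset.mul_sum]
  exact Finset.sum_congr rfl fun _ _ => by ring

theorem isSociallyOptimal_linear_uniform (N : ℕ) (hN : 0 < N) (Rs a : ℝ) (hRs : 0 ≤ Rs)
    (ha : 0 ≤ a) : IsSociallyOptimal N Rs (fun _ r => a * r) (fun _ => Rs / N) := by
  have hN' : (0 : ℝ) < N := Nat.cast_pos.2 hN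
  refine ⟨⟨fun _ => by positivity, by simp [field]⟩, fun g hg => ?_⟩
  have cauchy_schwarz := sq_sum_le_card_mul_sum_sq (s := Finset.univ) (f := g)
  rw [hg.2, Finset.card_univ, Fintype.card_fin] at cauchy_schwarz
  rw [totalCost_linear, totalCost_linear]
  refine mul_le_mul_of_nonneg_left ?_ (by positivity)
  calc ∑ _i : Fin N, (Rs / N) ^ 2 = Rs ^ 2 / N := by simp [field]
    _ ≤ ∑ i, g i ^ 2 := by rwa [div_le_iff₀' hN']

theorem totalCost_linear_uniform (N : ℕ) (Rs a : ℝ) :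
    totalCost N (fun _ r => a * r) (fun _ => Rs / N) = a * Rs ^ 2 / (2 * N) := by
  rcases N.eq_zero_or_pos with rfl | hN
  · simp [totalCost]
  · rw [totalCost_linear]
    simp [field]

theorem Finset.sum_apply_ite_eq_of_mem {ι α M : Type*} [DecidableEq ι] [Zero α]
    [AddCommMonoid M] {s : Finset ι} {j : ι} (hj : j ∈ s) (φ : α → M) (hφ0 : φ 0 = 0) (x : α) :
    ∑ k ∈ s, φ (if k = j then x else 0) = φ x := by
  simp_rw [apply_ite φ, hφ0]
  rw [Finset.sum_ite_eq', if_pos hj]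

theorem Bhat_const_of_subadditive {N : ℕ} (hN : 1 < N) (φ : ℝ → ℝ) (hφ0 : φ 0 = 0)
    (hφ : ∀ x y, 0 ≤ x → 0 ≤ y → φ (x + y) ≤ φ x + φ y) (i : Fin N) {t : ℝ} (ht : 0 ≤ t) :
    Bhat N (fun _ => φ) i t = φ t := by
  obtain ⟨j, hji⟩ := Fintype.exists_ne_of_one_lt_card (by rwa [Fintype.card_fin]) i
  have hj : j ∈ Finset.univ.erase i := Finset.mem_erase.2 ⟨hji, Finset.mem_univ j⟩
  refine IsLeast.csInf_eq ⟨⟨fun k => if k = j then t else 0,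
    fun k => by dsimp only; split_ifs <;> simp [ht], by rw [Finset.sum_ite_eq', if_pos hj],
    (Finset.sum_apply_ite_eq_of_mem hj φ hφ0 t).symm⟩, ?_⟩
  rintro c ⟨g, hg, rfl, rfl⟩
  exact Finset.le_sum_of_subadditive_on_pred φ (0 ≤ ·) hφ0.le hφ (fun _ _ => add_nonneg) g
    fun k _ => hg k

theorem quadratic_add_le (c a : ℝ) (ha : 0 ≤ a) (x y : ℝ) (hx : 0 ≤ x) (hy : 0 ≤ y) :
    c * (x + y) - a * (x + y) ^ 2 / 2 ≤ (c * x - a * x ^ 2 / 2) + (c * y - a * y ^ 2 / 2) := by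
  nlinarith [mul_nonneg (mul_nonneg ha hx) hy]

theorem isPricingProfile_quadratic (N : ℕ) (Rs a : ℝ) (ha : 0 ≤ a) :
    IsPricingProfile N Rs (fun _ t => a * Rs * t - a * t ^ 2 / 2) := by
  refine fun _ => ⟨by fun_prop, fun x hx y hy hxy => ?_, by simp⟩
  nlinarith [mul_nonneg (mul_nonneg ha (sub_nonneg.2 hxy)) (by linarith [hx.2, hy.2] :
    (0 : ℝ) ≤ 2 * Rs - x - y)]

theorem Bhat_quadratic_sub_Bhat {N : ℕ} (hN : 1 < N) {Rs a : ℝ} (hRs : 0 ≤ Rs) (ha : 0 ≤ a)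
    (i : Fin N) {t : ℝ} (ht : t ≤ Rs) :
    Bhat N (fun _ t => a * Rs * t - a * t ^ 2 / 2) i Rs -
      Bhat N (fun _ t => a * Rs * t - a * t ^ 2 / 2) i (Rs - t) = a * t ^ 2 / 2 := by
  have h_Bhat := fun t (ht : 0 ≤ t) => Bhat_const_of_subadditive hN
    (fun t => a * Rs * t - a * t ^ 2 / 2) (by simp) (quadratic_add_le (a * Rs) a ha) i ht
  rw [h_Bhat Rs hRs, h_Bhat (Rs - t) (sub_nonneg.2 ht)]
  ring

theorem isEquilibrium_linear_monopoly {N : ℕ} (hN : 1 < N) {Rs a : ℝ} (hRs : 0 ≤ Rs)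
    (ha : 0 ≤ a) (i₀ : Fin N) :
    IsEquilibrium N Rs (fun _ r => a * r) (fun _ t => a * Rs * t - a * t ^ 2 / 2)
      (fun i => if i = i₀ then Rs else 0) := by
  have h_revenue := Bhat_quadratic_sub_Bhat hN hRs ha
  have h_flow_nonneg : ∀ i, 0 ≤ if i = i₀ then Rs else 0 := fun i => by split_ifs <;> simp [hRs]
  have h_flow_le : ∀ i, (if i = i₀ then Rs else 0) ≤ Rs := fun i => by split_ifs <;> simp [hRs]
  refine ⟨isPricingProfile_quadratic N Rs a ha,
    ⟨h_flow_nonneg, by rw [Finset.sum_ite_eq', if_pos (Finset.mem_univ _)]⟩,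
    fun g hg => ?_, fun i t ht => ?_, fun i => ?_, fun i t ht => ?_⟩
  · have h_split := Finset.le_sum_of_subadditive_on_pred (s := Finset.univ)
      (fun t => a * Rs * t - a * t ^ 2 / 2) (0 ≤ ·) (by simp) (quadratic_add_le (a * Rs) a ha)
      (fun _ _ => add_nonneg) g fun k _ => hg.1 k
    rw [hg.2] at h_split
    rwa [Finset.sum_apply_ite_eq_of_mem (Finset.mem_univ i₀)
      (fun t => a * Rs * t - a * t ^ 2 / 2) (by simp)]
  · rw [h_revenue i ht.2]
    dsimp only
    nlinarith [mul_nonneg (mul_nonneg ha ht.1) (sub_nonneg.2 ht.2)]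
  · rw [h_revenue i (h_flow_le i)]
    dsimp only
    split_ifs <;> ring
  · rw [h_revenue i ht.2, h_revenue i (h_flow_le i), integral_const_mul_id,
      integral_const_mul_id, sub_self, sub_self]

/-- In the symmetric oligopoly with linear marginal costs `λ_i(r) = a·r`,
the socially optimal routing splits the flow evenly with cost `a·Rs²/(2N)`, while the
pricing profile `B_i(t) = a·Rs·t − a·t²/2` together with the monopolistic routing of all
flow to relay `1` is an equilibrium of cost `a·Rs²/2 = N ·` (optimal cost). -/
theorem linear_worst_case_equilibrium
    (N : ℕ) (hN : 2 ≤ N) (Rs a : ℝ) (hRs : 0 < Rs) (ha : 0 < a) :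
    (IsSociallyOptimal N Rs (fun _ r => a * r) (fun _ => Rs / N) ∧
      totalCost N (fun _ r => a * r) (fun _ => Rs / N) = a * Rs ^ 2 / (2 * N)) ∧
    (IsEquilibrium N Rs (fun _ r => a * r) (fun _ t => a * Rs * t - a * t ^ 2 / 2)
        (fun i => if i = (⟨0, by omega⟩ : Fin N) then Rs else 0) ∧
      totalCost N (fun _ r => a * r)
        (fun i => if i = (⟨0, by omega⟩ : Fin N) then Rs else 0) = a * Rs ^ 2 / 2 ∧
      a * Rs ^ 2 / 2 = N * (a * Rs ^ 2 / (2 * N))) := by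
  refine ⟨⟨isSociallyOptimal_linear_uniform N (by omega) Rs a hRs.le ha.le,
    totalCost_linear_uniform N Rs a⟩, isEquilibrium_linear_monopoly hN hRs.le ha.le _, ?_,
    by field_simp⟩
  rw [totalCost_linear, Finset.sum_apply_ite_eq_of_mem (Finset.mem_univ _) (· ^ 2) (by simp)]
  ring
end

section
/- The socially optimal routing of any oligopoly pricing game is induced by a focal equilibrium: with (r_i^*) the socially optimal routing and λ* := min_j λ_j(r_j^*), the pricing profile B_i(t) = λ*·t for all i, together with the routing (r_i^*), is an equilibrium that additionally satisfies the replicating condition B_i(t) = B_{î}(R_s) − B_{î}(R_s − t) for all t ∈ [0, r_i^*] and every relay i. -/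
open Finset MeasureTheory intervalIntegral Set

lemma Bhat_linear' (N : ℕ) (hN : 2 ≤ N) (c t : ℝ) (ht : 0 ≤ t) (i : Fin N)
    (B : Fin N → ℝ → ℝ) (hB : B = fun _ s => c * s) :
    (sInf {x : ℝ | ∃ g : Fin N → ℝ, (∀ j, 0 ≤ g j) ∧
      (∑ j ∈ Finset.univ.erase i, g j) = t ∧ x = ∑ j ∈ Finset.univ.erase i, B j (g j)}) = c * t := by
  subst hB
  have hne : (Finset.univ.erase i).Nonempty := by
    rw [← Finset.card_pos, Finset.card_erase_of_mem (Finset.mem_univ i), Finset.card_univ,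
      Fintype.card_fin]
    omega
  obtain ⟨j, hj⟩ := hne
  have hset : {x : ℝ | ∃ g : Fin N → ℝ, (∀ k, 0 ≤ g k) ∧
      (∑ k ∈ Finset.univ.erase i, g k) = t ∧
      x = ∑ k ∈ Finset.univ.erase i, (fun (_ : Fin N) s => c * s) k (g k)} = {c * t} := by
    ext x
    simp only [Set.mem_setOf_eq, Set.mem_singleton_iff]
    constructor
    · rintro ⟨g, hg0, hgsum, rfl⟩
      rw [← Finset.mul_sum, hgsum]
    · rintro rfl
      refine ⟨fun k => if k = j then t else 0, fun k => by by_cases h : k = j <;> simp [h, ht],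
        ?_, ?_⟩
      · rw [Finset.sum_ite_eq' (Finset.univ.erase i) j (fun _ => t)]
        simp [hj]
      · simp only
        rw [← Finset.mul_sum, Finset.sum_ite_eq' (Finset.univ.erase i) j (fun _ => t)]
        simp [hj]
  rw [hset, csInf_singleton]

lemma integral_bounds_aux {Rs : ℝ} {f : ℝ → ℝ} (hf : ContinuousOn f (Set.Icc 0 Rs))
    (hmono : MonotoneOn f (Set.Icc 0 Rs)) {a b : ℝ} (h0 : 0 ≤ a) (hab : a ≤ b) (hb : b ≤ Rs) :
    (b - a) * f a ≤ (∫ r in a..b, f r) ∧ (∫ r in a..b, f r) ≤ (b - a) * f b := by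
  have hsub : Set.Icc a b ⊆ Set.Icc 0 Rs := Set.Icc_subset_Icc h0 hb
  have hint : IntervalIntegrable f volume a b := by
    rw [intervalIntegrable_iff_integrableOn_Icc_of_le hab]
    exact (hf.mono hsub).integrableOn_compact isCompact_Icc
  have hma : a ∈ Set.Icc a b := Set.left_mem_Icc.2 hab
  have hmb : b ∈ Set.Icc a b := Set.right_mem_Icc.2 hab
  constructor
  · have := intervalIntegral.integral_mono_on hab (_root_.intervalIntegrable_const (c := f a)) hint
      (fun x hx => hmono (hsub hma) (hsub hx) hx.1)
    simpa [smul_eq_mul] using this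
  · have := intervalIntegral.integral_mono_on hab hint (_root_.intervalIntegrable_const (c := f b))
      (fun x hx => hmono (hsub hx) (hsub hmb) hx.2)
    simpa [smul_eq_mul] using this

lemma active_le_lamstar (N : ℕ) (Rs : ℝ) (lam : Fin N → ℝ → ℝ) (ropt : Fin N → ℝ) (lamstar : ℝ)
    (holig : IsOligopoly N Rs lam) (hopt : IsSociallyOptimal N Rs lam ropt)
    (hmin : IsLeast (Set.range fun j => lam j (ropt j)) lamstar)
    (i : Fin N) (hi : 0 < ropt i) : lam i (ropt i) ≤ lamstar := by
  obtain ⟨hr0, hrsum⟩ := hopt.1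
  have hRs := holig.2.1
  have hrle : ∀ k, ropt k ≤ Rs := fun k => by
    rw [← hrsum]
    exact Finset.single_le_sum (fun l _ => hr0 l) (Finset.mem_univ k)
  have hmemI : ∀ k, ropt k ∈ Set.Icc (0:ℝ) Rs := fun k => ⟨hr0 k, hrle k⟩
  obtain ⟨⟨j, hj⟩, _⟩ := hmin
  have hj' : lam j (ropt j) = lamstar := hj
  clear hj
  by_contra hgt
  push_neg at hgt
  have hji : j ≠ i := by
    rintro rfl
    exact absurd hj' (ne_of_gt hgt)
  have hij : i ≠ j := fun h => hji h.symm
  -- room: ropt j + ropt i ≤ Rs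
  have hroom : ropt j + ropt i ≤ Rs := by
    rw [← hrsum, ← Finset.sum_pair hji]
    exact Finset.sum_le_sum_of_subset_of_nonneg (Finset.subset_univ _)
      (fun k _ _ => hr0 k)
  set m : ℝ := min (ropt i) (Rs - ropt j) with hm_def
  have hm : 0 < m := lt_min hi (by linarith)
  -- continuity of the difference function
  set h : ℝ → ℝ := fun ε => lam j (ropt j + ε) - lam i (ropt i - ε) with hh_def
  have hcj : ContinuousWithinAt (fun ε => lam j (ropt j + ε)) (Set.Icc 0 m) 0 := by
    have h1 : ContinuousWithinAt (lam j) (Set.Icc 0 Rs) (ropt j + 0) := by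
      rw [add_zero]; exact (holig.2.2 j).2.1 _ (hmemI j)
    have h2 : ContinuousWithinAt (fun ε : ℝ => ropt j + ε) (Set.Icc 0 m) 0 :=
      (continuous_const.add continuous_id).continuousWithinAt
    exact h1.comp h2 (fun ε hε => ⟨by linarith [hr0 j, hε.1], by
      have := hε.2
      have := min_le_right (ropt i) (Rs - ropt j)
      simp only [hm_def] at *
      linarith⟩)
  have hci : ContinuousWithinAt (fun ε => lam i (ropt i - ε)) (Set.Icc 0 m) 0 := by
    have h1 : ContinuousWithinAt (lam i) (Set.Icc 0 Rs) (ropt i - 0) := by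
      rw [sub_zero]; exact (holig.2.2 i).2.1 _ (hmemI i)
    have h2 : ContinuousWithinAt (fun ε : ℝ => ropt i - ε) (Set.Icc 0 m) 0 :=
      (continuous_const.sub continuous_id).continuousWithinAt
    exact h1.comp h2 (fun ε hε => ⟨by
      have := hε.2
      have := min_le_left (ropt i) (Rs - ropt j)
      simp only [hm_def] at *
      linarith, by linarith [hε.1, hrle i]⟩)
  have hh : ContinuousWithinAt h (Set.Icc 0 m) 0 := hcj.sub hci
  have hh0 : h 0 < 0 := by
    simp only [hh_def, add_zero, sub_zero]
    linarith
  have hh' : ContinuousWithinAt h (Set.Ioc 0 m) 0 := hh.mono Set.Ioc_subset_Icc_self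
  have hev : ∀ᶠ ε in nhdsWithin 0 (Set.Ioc 0 m), h ε < 0 :=
    hh' (Iio_mem_nhds hh0)
  haveI : (nhdsWithin (0:ℝ) (Set.Ioc 0 m)).NeBot := by
    rw [nhdsWithin_Ioc_eq_nhdsGT hm]
    infer_instance
  obtain ⟨ε, hεneg, hεmem⟩ := (hev.and eventually_mem_nhdsWithin).exists
  obtain ⟨hε0, hεm⟩ := hεmem
  have hεi : ε ≤ ropt i := le_trans hεm (min_le_left _ _)
  have hεj : ropt j + ε ≤ Rs := by
    have := le_trans hεm (min_le_right (ropt i) (Rs - ropt j))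
    linarith
  -- the perturbed routing
  set g : Fin N → ℝ := fun k => if k = i then ropt i - ε else if k = j then ropt j + ε else ropt k
    with hg_def
  have hgi : g i = ropt i - ε := by simp [hg_def]
  have hgj : g j = ropt j + ε := by simp [hg_def, hji]
  have hgk : ∀ k, k ≠ i → k ≠ j → g k = ropt k := fun k h1 h2 => by simp [hg_def, h1, h2]
  have hgr : IsRouting N Rs g := by
    constructor
    · intro k
      by_cases h1 : k = i
      · subst h1; rw [hgi]; linarith
      · by_cases h2 : k = j
        · rw [h2, hgj]; linarith [hr0 j]
        · rw [hgk k h1 h2]; exact hr0 k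
    · have hδ : ∀ k, g k = ropt k + ((if k = i then -ε else 0) + (if k = j then ε else 0)) := by
        intro k
        by_cases h1 : k = i
        · subst h1; simp [hgi, hij]; ring
        · by_cases h2 : k = j
          · subst h2; simp [hgj, h1]
          · simp [hgk k h1 h2, h1, h2]
      calc (∑ k, g k) = ∑ k, (ropt k + ((if k = i then -ε else 0) + (if k = j then ε else 0))) :=
            Finset.sum_congr rfl (fun k _ => hδ k)
        _ = (∑ k, ropt k) + ((∑ k, if k = i then -ε else 0) + (∑ k, if k = j then ε else 0)) := by
            rw [Finset.sum_add_distrib, Finset.sum_add_distrib]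
        _ = Rs := by
            rw [hrsum, Finset.sum_ite_eq' Finset.univ i (fun _ => -ε),
              Finset.sum_ite_eq' Finset.univ j (fun _ => ε)]
            simp
  -- integrability helper
  have hint : ∀ k a b, 0 ≤ a → a ≤ b → b ≤ Rs → IntervalIntegrable (lam k) volume a b := by
    intro k a b h0 hab hb
    rw [intervalIntegrable_iff_integrableOn_Icc_of_le hab]
    exact (((holig.2.2 k).2.1).mono (Set.Icc_subset_Icc h0 hb)).integrableOn_compact isCompact_Icc
  -- cost comparison
  have hcost := hopt.2 g hgr
  have hsplit : totalCost N lam g - totalCost N lam ropt =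
      ((∫ r in (0:ℝ)..(g i), lam i r) - ∫ r in (0:ℝ)..(ropt i), lam i r) +
      ((∫ r in (0:ℝ)..(g j), lam j r) - ∫ r in (0:ℝ)..(ropt j), lam j r) := by
    have : totalCost N lam g - totalCost N lam ropt =
        ∑ k, ((∫ r in (0:ℝ)..(g k), lam k r) - ∫ r in (0:ℝ)..(ropt k), lam k r) := by
      rw [Finset.sum_sub_distrib]; rfl
    have hsub2 : ∑ k ∈ ({i, j} : Finset (Fin N)),
        ((∫ r in (0:ℝ)..(g k), lam k r) - ∫ r in (0:ℝ)..(ropt k), lam k r) =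
        ∑ k, ((∫ r in (0:ℝ)..(g k), lam k r) - ∫ r in (0:ℝ)..(ropt k), lam k r) := by
      apply Finset.sum_subset (Finset.subset_univ _)
      intro k _ hk
      simp only [Finset.mem_insert, Finset.mem_singleton, not_or] at hk
      rw [hgk k hk.1 hk.2, sub_self]
    rw [Finset.sum_pair hij] at hsub2
    rw [this, ← hsub2]
  have hIi : (∫ r in (0:ℝ)..(g i), lam i r) - (∫ r in (0:ℝ)..(ropt i), lam i r) =
      -(∫ r in (ropt i - ε)..(ropt i), lam i r) := by
    rw [hgi, ← intervalIntegral.integral_interval_sub_left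
      (hint i 0 (ropt i) le_rfl (hr0 i) (hrle i))
      (hint i 0 (ropt i - ε) le_rfl (by linarith) (by linarith [hrle i]))]
    ring
  have hIj : (∫ r in (0:ℝ)..(g j), lam j r) - (∫ r in (0:ℝ)..(ropt j), lam j r) =
      ∫ r in (ropt j)..(ropt j + ε), lam j r := by
    rw [hgj, ← intervalIntegral.integral_interval_sub_left
      (hint j 0 (ropt j + ε) le_rfl (by linarith [hr0 j]) hεj)
      (hint j 0 (ropt j) le_rfl (hr0 j) (hrle j))]
  -- bounds
  have hbi := (integral_bounds_aux (holig.2.2 i).2.1 ((holig.2.2 i).2.2.monotoneOn)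
      (a := ropt i - ε) (b := ropt i) (by linarith) (by linarith) (hrle i)).1
  have hbj := (integral_bounds_aux (holig.2.2 j).2.1 ((holig.2.2 j).2.2.monotoneOn)
      (a := ropt j) (b := ropt j + ε) (hr0 j) (by linarith) hεj).2
  have hhε : lam j (ropt j + ε) - lam i (ropt i - ε) < 0 := hεneg
  nlinarith [hcost, hsplit, hIi, hIj, hbi, hbj]

lemma Bhat_eval (N : ℕ) (hN : 2 ≤ N) (c t : ℝ) (ht : 0 ≤ t) (i : Fin N) :
    Bhat N (fun _ s => c * s) i t = c * t := by
  rw [Bhat]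
  exact Bhat_linear' N hN c t ht i _ rfl

lemma key_ineq (N : ℕ) (Rs : ℝ) (lam : Fin N → ℝ → ℝ) (ropt : Fin N → ℝ) (lamstar : ℝ)
    (holig : IsOligopoly N Rs lam) (hopt : IsSociallyOptimal N Rs lam ropt)
    (hmin : IsLeast (Set.range fun j => lam j (ropt j)) lamstar)
    (i : Fin N) {t : ℝ} (ht : t ∈ Set.Icc (0:ℝ) Rs) :
    lamstar * t - (∫ r in (0:ℝ)..t, lam i r) ≤
      lamstar * ropt i - ∫ r in (0:ℝ)..(ropt i), lam i r := by
  obtain ⟨hr0, hrsum⟩ := hopt.1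
  have hrle : ∀ k, ropt k ≤ Rs := fun k => by
    rw [← hrsum]
    exact Finset.single_le_sum (fun l _ => hr0 l) (Finset.mem_univ k)
  have hls : lamstar ≤ lam i (ropt i) := hmin.2 ⟨i, rfl⟩
  have hcont := (holig.2.2 i).2.1
  have hmono := (holig.2.2 i).2.2.monotoneOn
  have hint : ∀ a b : ℝ, 0 ≤ a → a ≤ b → b ≤ Rs → IntervalIntegrable (lam i) volume a b := by
    intro a b h0 hab hb
    rw [intervalIntegrable_iff_integrableOn_Icc_of_le hab]
    exact (hcont.mono (Set.Icc_subset_Icc h0 hb)).integrableOn_compact isCompact_Icc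
  rcases le_or_gt (ropt i) t with hc | hc
  · have hI : (∫ r in (0:ℝ)..t, lam i r) - (∫ r in (0:ℝ)..(ropt i), lam i r) =
        ∫ r in (ropt i)..t, lam i r :=
      intervalIntegral.integral_interval_sub_left (hint 0 t le_rfl ht.1 ht.2)
        (hint 0 (ropt i) le_rfl (hr0 i) (hrle i))
    have hb := (integral_bounds_aux hcont hmono (hr0 i) hc ht.2).1
    have hmul : (t - ropt i) * lamstar ≤ (t - ropt i) * lam i (ropt i) :=
      mul_le_mul_of_nonneg_left hls (by linarith)
    nlinarith
  · have hi : 0 < ropt i := lt_of_le_of_lt ht.1 hc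
    have hla : lam i (ropt i) ≤ lamstar :=
      active_le_lamstar N Rs lam ropt lamstar holig hopt hmin i hi
    have hI : (∫ r in (0:ℝ)..(ropt i), lam i r) - (∫ r in (0:ℝ)..t, lam i r) =
        ∫ r in t..(ropt i), lam i r :=
      intervalIntegral.integral_interval_sub_left (hint 0 (ropt i) le_rfl (hr0 i) (hrle i))
        (hint 0 t le_rfl ht.1 ht.2)
    have hb := (integral_bounds_aux hcont hmono ht.1 hc.le (hrle i)).2
    have hmul : (ropt i - t) * lam i (ropt i) ≤ (ropt i - t) * lamstar :=
      mul_le_mul_of_nonneg_left hla (by linarith)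
    nlinarith

/-- The socially optimal routing of an oligopoly is induced by a focal
equilibrium: the constant-marginal-price profile `B i t = lamstar * t` with the socially
optimal routing is an equilibrium satisfying the replicating condition. -/
theorem focal_equilibrium_exists
    (N : ℕ) (Rs : ℝ) (lam : Fin N → ℝ → ℝ) (ropt : Fin N → ℝ) (lamstar : ℝ)
    (holig : IsOligopoly N Rs lam)
    (hopt : IsSociallyOptimal N Rs lam ropt)
    (hmin : IsLeast (Set.range fun j => lam j (ropt j)) lamstar) :
    IsEquilibrium N Rs lam (fun _ t => lamstar * t) ropt ∧
    ∀ i, ∀ t ∈ Set.Icc 0 (ropt i),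
      lamstar * t =
        Bhat N (fun _ t => lamstar * t) i Rs - Bhat N (fun _ t => lamstar * t) i (Rs - t) := by
  have hN := holig.1
  have hRs := holig.2.1
  obtain ⟨hr0, hrsum⟩ := hopt.1
  have hrle : ∀ k, ropt k ≤ Rs := fun k => by
    rw [← hrsum]
    exact Finset.single_le_sum (fun l _ => hr0 l) (Finset.mem_univ k)
  have hpos : 0 < lamstar := by
    obtain ⟨⟨j, hj⟩, _⟩ := hmin
    have hj' : lam j (ropt j) = lamstar := hj
    rw [← hj']
    exact (holig.2.2 j).1 _ ⟨hr0 j, hrle j⟩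
  have hB : ∀ (i : Fin N) (s : ℝ), 0 ≤ s →
      Bhat N (fun _ u => lamstar * u) i s = lamstar * s :=
    fun i s hs => Bhat_eval N hN lamstar s hs i
  constructor
  · refine ⟨?_, ⟨hr0, hrsum⟩, ?_, ?_, ?_, ?_⟩
    · intro i
      exact ⟨(continuous_const.mul continuous_id).continuousOn,
        fun a _ b _ hab => mul_le_mul_of_nonneg_left hab hpos.le, mul_zero _⟩
    · intro g hg
      show (∑ i, lamstar * ropt i) ≤ ∑ i, lamstar * g i
      rw [← Finset.mul_sum, ← Finset.mul_sum, hrsum, hg.2]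
    · intro i t ht
      rw [hB i Rs hRs.le, hB i (Rs - t) (by linarith [ht.2])]
      show _ ≤ lamstar * t
      have : lamstar * Rs - lamstar * (Rs - t) = lamstar * t := by ring
      linarith
    · intro i
      rw [hB i Rs hRs.le, hB i (Rs - ropt i) (by linarith [hrle i])]
      show lamstar * ropt i = _
      ring
    · intro i t ht
      rw [hB i Rs hRs.le, hB i (Rs - t) (by linarith [ht.2]),
        hB i (Rs - ropt i) (by linarith [hrle i])]
      have h1 : lamstar * Rs - lamstar * (Rs - t) = lamstar * t := by ring
      have h2 : lamstar * Rs - lamstar * (Rs - ropt i) = lamstar * ropt i := by ring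
      have h3 := key_ineq N Rs lam ropt lamstar holig hopt hmin i ht
      linarith
  · intro i t ht
    have ht2 : t ≤ Rs := le_trans ht.2 (hrle i)
    rw [hB i Rs hRs.le, hB i (Rs - t) (by linarith)]
    ring
end

section
/- Every focal equilibrium of an oligopoly pricing game is efficient: if ((B_i),(f_i^*)) is an equilibrium satisfying the replicating condition B_i(t) = B_{î}(R_s) − B_{î}(R_s − t) for all t ∈ [0, f_i^*] and every relay i, then (f_i^*) is the socially optimal routing. -/
open Finset MeasureTheory intervalIntegral Set

/-! Trading traffic `δ` between relays `i ≠ j` shows, at a focal equilibrium, that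
`λ_i(f_i - δ) δ ≤ B_i(f_i) - B_i(f_i - δ) ≤ B_ĵ(R_s - f_j) - B_ĵ(R_s - f_j - δ) ≤ λ_j(f_j + δ) δ`:
the outer inequalities are relay `i`'s and relay `j`'s profit maximisation (the first one
needs the replicating condition to identify `B_i` with the revenue `B_î(R_s) - B_î(R_s - t)`),
the middle one holds because `j`'s virtual competitor can serve `R_s - f_j - δ` by copying `f`
with relay `i`'s share cut by `δ`, while `f` itself is optimal for the prices. Letting `δ → 0` gives
`λ_i(f_i) ≤ λ_j(f_j)` whenever `f_i > 0`, so all used relays share one marginal cost `μ` and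
unused ones have marginal cost at least `μ`; these are the optimality conditions of the convex
routing problem. -/

open Filter Topology Function

theorem MonotoneOn.mul_sub_le_intervalIntegral {φ : ℝ → ℝ} {a b : ℝ}
    (hφ : MonotoneOn φ (uIcc a b)) : φ a * (b - a) ≤ ∫ x in a..b, φ x := by
  rcases le_total a b with hab | hba
  · have hmono : MonotoneOn φ (Icc a b) := uIcc_of_le hab ▸ hφ
    calc φ a * (b - a) = ∫ _ in a..b, φ a := by simp [mul_comm]
      _ ≤ ∫ x in a..b, φ x :=
        integral_mono_on hab intervalIntegrable_const hφ.intervalIntegrable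
          fun x hx => hmono (left_mem_Icc.2 hab) hx hx.1
  · have hmono : MonotoneOn φ (Icc b a) := uIcc_of_ge hba ▸ hφ
    calc φ a * (b - a) = -∫ _ in b..a, φ a := by simp; ring
      _ ≤ -∫ x in b..a, φ x :=
        neg_le_neg <| integral_mono_on hba hφ.intervalIntegrable.symm intervalIntegrable_const
          fun x hx => hmono hx (right_mem_Icc.2 hba) hx.2
      _ = ∫ x in a..b, φ x := (integral_symm b a).symm

theorem Finset.sum_apply_update_of_mem {ι α M : Type*} [DecidableEq ι] [AddCommMonoid M]
    (φ : ι → α → M) (g : ι → α) {s : Finset ι} {i : ι} (hi : i ∈ s) (v : α) :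
    ∑ k ∈ s, φ k (update g i v k) = φ i v + ∑ k ∈ s.erase i, φ k (g k) := by
  rw [← add_sum_erase s _ hi, update_self]
  congr 1
  exact sum_congr rfl fun k hk => by rw [update_of_ne (ne_of_mem_erase hk)]

namespace IsRouting

variable {N : ℕ} {Rs : ℝ} {f : Fin N → ℝ}

theorem mem_Icc_s12 (hf : IsRouting N Rs f) (i : Fin N) : f i ∈ Icc 0 Rs :=
  ⟨hf.1 i, hf.2 ▸ single_le_sum (fun j _ => hf.1 j) (mem_univ i)⟩

theorem sum_erase (hf : IsRouting N Rs f) (j : Fin N) :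
    ∑ k ∈ univ.erase j, f k = Rs - f j := by
  rw [sum_erase_eq_sub (mem_univ j), hf.2]

theorem add_le (hf : IsRouting N Rs f) {i j : Fin N} (hij : i ≠ j) : f i + f j ≤ Rs := by
  have := single_le_sum (fun k _ => hf.1 k) (mem_erase.2 ⟨hij, mem_univ i⟩)
  linarith [hf.sum_erase j]

theorem exists_pos (hf : IsRouting N Rs f) (hRs : 0 < Rs) : ∃ i, 0 < f i :=
  exists_lt_of_sum_lt (s := univ) (f := 0) (by simpa [hf.2] using hRs) |>.imp fun _ h => h.2

end IsRouting

section VirtualCompetitor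

variable {N : ℕ} {Rs : ℝ} {B : Fin N → ℝ → ℝ} {f : Fin N → ℝ}

theorem Bhat_le_sum (hB : IsPricingProfile N Rs B) {j : Fin N} {t : ℝ} (ht : t ≤ Rs)
    {g : Fin N → ℝ} (hg : ∀ k, 0 ≤ g k) (hgt : ∑ k ∈ univ.erase j, g k = t) :
    Bhat N B j t ≤ ∑ k ∈ univ.erase j, B k (g k) := by
  refine csInf_le ⟨0, ?_⟩ ⟨g, hg, hgt, rfl⟩
  rintro _ ⟨g', hg', hsum, rfl⟩
  refine sum_nonneg fun k hk => ?_
  have hkRs : g' k ≤ Rs := (single_le_sum (fun l _ => hg' l) hk).trans (hsum.trans_le ht)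
  simpa [(hB k).2.2] using
    (hB k).2.1 ⟨le_rfl, (hg' k).trans hkRs⟩ ⟨hg' k, hkRs⟩ (hg' k)

theorem sum_erase_le_Bhat (hf : IsRouting N Rs f)
    (hmin : ∀ g, IsRouting N Rs g → ∑ i, B i (f i) ≤ ∑ i, B i (g i)) (j : Fin N) :
    ∑ k ∈ univ.erase j, B k (f k) ≤ Bhat N B j (Rs - f j) := by
  refine le_csInf ⟨_, f, hf.1, hf.sum_erase j, rfl⟩ ?_
  rintro _ ⟨g, hg, hgsum, rfl⟩
  have hroute : IsRouting N Rs (update g j (f j)) := by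
    refine ⟨(forall_update_iff g (p := fun _ x => 0 ≤ x)).2 ⟨hf.1 j, fun k _ => hg k⟩, ?_⟩
    have := sum_apply_update_of_mem (fun _ x => x) g (mem_univ j) (f j)
    linarith
  have := hmin _ hroute
  rw [sum_apply_update_of_mem B g (mem_univ j), ← add_sum_erase _ _ (mem_univ j)] at this
  linarith

theorem sub_le_Bhat_sub (hB : IsPricingProfile N Rs B) (hf : IsRouting N Rs f)
    (hmin : ∀ g, IsRouting N Rs g → ∑ i, B i (f i) ≤ ∑ i, B i (g i))
    {i j : Fin N} (hij : i ≠ j) {δ : ℝ} (hδ : δ ∈ Icc 0 (f i)) :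
    B i (f i) - B i (f i - δ) ≤ Bhat N B j (Rs - f j) - Bhat N B j (Rs - f j - δ) := by
  have hi : i ∈ univ.erase j := mem_erase.2 ⟨hij, mem_univ i⟩
  have hg : ∀ k, 0 ≤ update f i (f i - δ) k :=
    (forall_update_iff f (p := fun _ x => 0 ≤ x)).2 ⟨by linarith [hδ.2], fun k _ => hf.1 k⟩
  have hgsum : ∑ k ∈ univ.erase j, update f i (f i - δ) k = Rs - f j - δ := by
    have := sum_apply_update_of_mem (fun _ x => x) f hi (f i - δ)
    linarith [add_sum_erase _ f hi, hf.sum_erase j]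
  have hupper := Bhat_le_sum hB (by linarith [hf.1 j, hδ.1]) hg hgsum
  rw [sum_apply_update_of_mem B f hi] at hupper
  have hlower := sum_erase_le_Bhat hf hmin j
  rw [← add_sum_erase _ _ hi] at hlower
  linarith

end VirtualCompetitor

section Equilibrium

variable {N : ℕ} {Rs : ℝ} {lam B : Fin N → ℝ → ℝ} {f : Fin N → ℝ}

theorem integral_le_Bhat_sub {i : Fin N} (hmono : MonotoneOn (lam i) (Icc 0 Rs))
    (hmax : ∀ t ∈ Icc (0:ℝ) Rs,
      Bhat N B i Rs - Bhat N B i (Rs - t) - (∫ r in (0:ℝ)..t, lam i r) ≤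
      Bhat N B i Rs - Bhat N B i (Rs - f i) - ∫ r in (0:ℝ)..(f i), lam i r)
    (hfi : f i ∈ Icc 0 Rs) {t : ℝ} (ht : t ∈ Icc 0 Rs) :
    ∫ r in t..f i, lam i r ≤ Bhat N B i (Rs - t) - Bhat N B i (Rs - f i) := by
  have h0 : (0:ℝ) ∈ Icc 0 Rs := ⟨le_rfl, ht.1.trans ht.2⟩
  rw [← integral_interval_sub_left (hmono.mono (uIcc_subset_Icc h0 hfi)).intervalIntegrable
    (hmono.mono (uIcc_subset_Icc h0 ht)).intervalIntegrable]
  linarith [hmax t ht]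

theorem marginal_cost_sub_le_add (hmono : ∀ i, MonotoneOn (lam i) (Icc 0 Rs))
    (heq : IsEquilibrium N Rs lam B f) {i j : Fin N} (hij : i ≠ j)
    (hfocal : ∀ t ∈ Icc 0 (f i), B i t = Bhat N B i Rs - Bhat N B i (Rs - t))
    {δ : ℝ} (hδ : δ ∈ Ioc 0 (f i)) : lam i (f i - δ) ≤ lam j (f j + δ) := by
  obtain ⟨hB, hf, hmin, -, -, hmax⟩ := heq
  have hfij := hf.add_le hij
  have hfi := hf.mem_Icc_s12 i
  have hfj := hf.mem_Icc_s12 j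
  have hsub : f i - δ ∈ Icc 0 (f i) := ⟨by linarith [hδ.2], by linarith [hδ.1]⟩
  have hadd : f j + δ ∈ Icc 0 Rs := ⟨by linarith [hfj.1, hδ.1], by linarith [hδ.2]⟩
  refine le_of_mul_le_mul_right ?_ hδ.1
  calc lam i (f i - δ) * δ = lam i (f i - δ) * (f i - (f i - δ)) := by ring
    _ ≤ ∫ r in (f i - δ)..f i, lam i r :=
      ((hmono i).mono (uIcc_subset_Icc ⟨hsub.1, hsub.2.trans hfi.2⟩ hfi)).mul_sub_le_intervalIntegral
    _ ≤ Bhat N B i (Rs - (f i - δ)) - Bhat N B i (Rs - f i) :=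
      integral_le_Bhat_sub (hmono i) (hmax i) hfi ⟨hsub.1, hsub.2.trans hfi.2⟩
    _ = B i (f i) - B i (f i - δ) := by
      rw [hfocal _ hsub, hfocal _ (right_mem_Icc.2 hfi.1)]
      ring
    _ ≤ Bhat N B j (Rs - f j) - Bhat N B j (Rs - f j - δ) :=
      sub_le_Bhat_sub hB hf hmin hij ⟨hδ.1.le, hδ.2⟩
    _ ≤ -∫ r in (f j + δ)..f j, lam j r := by
      have := integral_le_Bhat_sub (hmono j) (hmax j) hfj hadd
      rw [sub_add_eq_sub_sub] at this
      linarith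
    _ ≤ lam j (f j + δ) * δ := by
      have := ((hmono j).mono (uIcc_subset_Icc hadd hfj)).mul_sub_le_intervalIntegral
      linarith

theorem marginal_cost_le_of_pos (hcont : ∀ i, ContinuousOn (lam i) (Icc 0 Rs))
    (hmono : ∀ i, MonotoneOn (lam i) (Icc 0 Rs)) (heq : IsEquilibrium N Rs lam B f)
    (hfocal : ∀ i, ∀ t ∈ Icc 0 (f i), B i t = Bhat N B i Rs - Bhat N B i (Rs - t))
    {i j : Fin N} (hij : i ≠ j) (hfi : 0 < f i) : lam i (f i) ≤ lam j (f j) := by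
  have hf := heq.2.1
  have hfij := hf.add_le hij
  have hleft : Tendsto (fun δ => lam i (f i - δ)) (𝓝[>] 0) (𝓝 (lam i (f i))) := by
    refine (hcont i (f i) (hf.mem_Icc_s12 i)).tendsto.comp (tendsto_nhdsWithin_iff.2 ⟨?_, ?_⟩)
    · exact ((continuous_const.sub continuous_id).tendsto' 0 _ (sub_zero _)).mono_left
        nhdsWithin_le_nhds
    · filter_upwards [Ioo_mem_nhdsGT hfi] with δ hδ
      exact ⟨by linarith [hδ.2], by linarith [hδ.1, hf.1 j]⟩
  have hright : Tendsto (fun δ => lam j (f j + δ)) (𝓝[>] 0) (𝓝 (lam j (f j))) := by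
    refine (hcont j (f j) (hf.mem_Icc_s12 j)).tendsto.comp (tendsto_nhdsWithin_iff.2 ⟨?_, ?_⟩)
    · exact ((continuous_const.add continuous_id).tendsto' 0 _ (add_zero _)).mono_left
        nhdsWithin_le_nhds
    · filter_upwards [Ioo_mem_nhdsGT hfi] with δ hδ
      exact ⟨by linarith [hδ.1, hf.1 j], by linarith [hδ.2]⟩
  refine le_of_tendsto_of_tendsto hleft hright ?_
  filter_upwards [Ioo_mem_nhdsGT hfi] with δ hδ
  exact marginal_cost_sub_le_add hmono heq hij (hfocal i) ⟨hδ.1, hδ.2.le⟩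

end Equilibrium

theorem isSociallyOptimal_of_marginal_cost {N : ℕ} {Rs : ℝ} {lam : Fin N → ℝ → ℝ}
    {f : Fin N → ℝ} (hmono : ∀ i, MonotoneOn (lam i) (Icc 0 Rs)) (hf : IsRouting N Rs f)
    {μ : ℝ} (hle : ∀ i, μ ≤ lam i (f i)) (hge : ∀ i, 0 < f i → lam i (f i) ≤ μ) :
    IsSociallyOptimal N Rs lam f := by
  refine ⟨hf, fun g hg => ?_⟩
  have hlocal : ∀ i, μ * (g i - f i) ≤
      (∫ r in (0:ℝ)..g i, lam i r) - ∫ r in (0:ℝ)..f i, lam i r := by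
    intro i
    have h0 : (0:ℝ) ∈ Icc 0 Rs := ⟨le_rfl, (hf.1 i).trans (hf.mem_Icc_s12 i).2⟩
    have hmul : μ * (g i - f i) ≤ lam i (f i) * (g i - f i) := by
      rcases (hf.1 i).eq_or_lt with h | h
      · exact mul_le_mul_of_nonneg_right (hle i) (by linarith [hg.1 i])
      · rw [le_antisymm (hle i) (hge i h)]
    rw [integral_interval_sub_left
      ((hmono i).mono (uIcc_subset_Icc h0 (hg.mem_Icc_s12 i))).intervalIntegrable
      ((hmono i).mono (uIcc_subset_Icc h0 (hf.mem_Icc_s12 i))).intervalIntegrable]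
    exact hmul.trans
      ((hmono i).mono (uIcc_subset_Icc (hf.mem_Icc_s12 i) (hg.mem_Icc_s12 i))).mul_sub_le_intervalIntegral
  have := sum_le_sum fun i (_ : i ∈ Finset.univ) => hlocal i
  rw [← mul_sum, sum_sub_distrib, sum_sub_distrib, hg.2, hf.2, sub_self, mul_zero] at this
  unfold totalCost
  linarith

theorem focal_equilibrium_efficient_general
    (N : ℕ) (Rs : ℝ) (lam B : Fin N → ℝ → ℝ) (f : Fin N → ℝ)
    (holig : IsOligopoly N Rs lam)
    (heq : IsEquilibrium N Rs lam B f)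
    (hfocal : ∀ i, ∀ t ∈ Set.Icc 0 (f i),
      B i t = Bhat N B i Rs - Bhat N B i (Rs - t)) :
    IsSociallyOptimal N Rs lam f := by
  obtain ⟨-, hRs, hlam⟩ := holig
  have hcont i := (hlam i).2.1
  have hmono i := (hlam i).2.2.monotoneOn
  have hf := heq.2.1
  obtain ⟨i₀, hi₀⟩ := hf.exists_pos hRs
  refine isSociallyOptimal_of_marginal_cost hmono hf (μ := lam i₀ (f i₀)) (fun i => ?_) ?_
  · rcases eq_or_ne i₀ i with rfl | h
    · exact le_rfl
    · exact marginal_cost_le_of_pos hcont hmono heq hfocal h hi₀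
  · intro i hi
    rcases eq_or_ne i i₀ with rfl | h
    · exact le_rfl
    · exact marginal_cost_le_of_pos hcont hmono heq hfocal h hi

/-- Every focal equilibrium of an oligopoly pricing game is efficient. -/
theorem focal_equilibrium_efficient
    (N : ℕ) (Rs : ℝ) (lam B : Fin N → ℝ → ℝ) (f : Fin N → ℝ)
    (holig : IsOligopoly N Rs lam)
    (heq : IsEquilibrium N Rs lam B f)
    (hfocal : ∀ i, ∀ t ∈ Set.Icc 0 (f i),
      B i t = Bhat N B i Rs - Bhat N B i (Rs - t))
    (hderivB : ∀ i, HasOneSidedDerivs Rs (B i))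
    (hderivBhat : ∀ i, HasOneSidedDerivs Rs (Bhat N B i)) :
    IsSociallyOptimal N Rs lam f :=
  focal_equilibrium_efficient_general N Rs lam B f holig heq hfocal
end

section
/- Let N ≥ 2, R_s > 0, fix an index i, let B_j : [0,R_s] → ℝ for j ≠ i be continuous with B_j(0) = 0, and let λ_i : [0,R_s] → ℝ be continuous. Define B_{î}(t) := min{ ∑_{j≠i} B_j(g_j) : g_j ≥ 0 for j ≠ i, ∑_{j≠i} g_j = t } and the replicating pricing function B_i(t) := B_{î}(R_s) − B_{î}(R_s − t). Let f̃ maximize t ↦ B_i(t) − ∫_0^t λ_i(r) dr over [0,R_s]. Then: (a) the allocation that assigns f̃ to i and an optimal split of R_s − f̃ to the indices j ≠ i minimizes ∑_j B_j(g_j) over all (g_j) with g_j ≥ 0 and ∑_j g_j = R_s; and (b) B_i is a best response: for every continuous B_i' : [0,R_s] → ℝ with B_i'(0) = 0 and every (g_j) minimizing B_i'(g_i) + ∑_{j≠i} B_j(g_j) over the same simplex, one has B_i'(g_i) − ∫_0^{g_i} λ_i(r) dr ≤ B_i(f̃) − ∫_0^{f̃} λ_i(r) dr. -/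
open Finset MeasureTheory intervalIntegral Set

lemma bhat_key (N : ℕ) (hN : 2 ≤ N) (Rs : ℝ) (i : Fin N) (B : Fin N → ℝ → ℝ)
    (hBcont : ∀ j, j ≠ i → ContinuousOn (B j) (Set.Icc 0 Rs))
    {t : ℝ} (ht : t ∈ Set.Icc 0 Rs) :
    (∃ h : Fin N → ℝ, (∀ j, 0 ≤ h j) ∧ (∑ j ∈ Finset.univ.erase i, h j) = t ∧
      (∑ j ∈ Finset.univ.erase i, B j (h j)) = Bhat N B i t) ∧
    ∀ g : Fin N → ℝ, (∀ j, 0 ≤ g j) → (∑ j ∈ Finset.univ.erase i, g j) = t →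
      Bhat N B i t ≤ ∑ j ∈ Finset.univ.erase i, B j (g j) := by
  classical
  set F : (Fin N → ℝ) → ℝ := fun g => ∑ j ∈ Finset.univ.erase i, B j (g j) with hF
  set K : Set (Fin N → ℝ) :=
    (Set.pi Set.univ fun _ => Set.Icc (0:ℝ) t) ∩ {g | ∑ j ∈ Finset.univ.erase i, g j = t}
    with hK
  have hKc : IsCompact K := by
    refine (isCompact_univ_pi fun _ => isCompact_Icc).inter_right ?_
    exact isClosed_eq (continuous_finset_sum _ fun j _ => continuous_apply j) continuous_const
  have hKne : K.Nonempty := by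
    haveI : Nontrivial (Fin N) := Fin.nontrivial_iff_two_le.mpr hN
    obtain ⟨j0, hj0⟩ := exists_ne i
    refine ⟨fun j => if j = j0 then t else 0, ?_, ?_⟩
    · intro j _
      by_cases hj : j = j0 <;> simp [hj, ht.1, le_refl]
    · simp only [Set.mem_setOf_eq]
      rw [Finset.sum_eq_single_of_mem j0 (Finset.mem_erase.mpr ⟨hj0, Finset.mem_univ _⟩)
        (fun b _ hb => if_neg hb)]
      simp
  have hFc : ContinuousOn F K := by
    apply continuousOn_finset_sum
    intro j hj
    refine (hBcont j (Finset.ne_of_mem_erase hj)).comp (continuous_apply j).continuousOn ?_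
    intro g hg
    have := hg.1 j (Set.mem_univ j)
    exact ⟨this.1, this.2.trans ht.2⟩
  have hSeq : {c : ℝ | ∃ g : Fin N → ℝ, (∀ j, 0 ≤ g j) ∧
      (∑ j ∈ Finset.univ.erase i, g j) = t ∧ c = ∑ j ∈ Finset.univ.erase i, B j (g j)}
      = F '' K := by
    ext c
    constructor
    · rintro ⟨g, hg0, hgs, rfl⟩
      refine ⟨fun j => if j = i then 0 else g j, ⟨?_, ?_⟩, ?_⟩
      · intro j _
        by_cases hj : j = i
        · simp [hj, ht.1]
        · simp only [hj, if_false]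
          refine ⟨hg0 j, ?_⟩
          calc g j ≤ ∑ k ∈ Finset.univ.erase i, g k :=
                Finset.single_le_sum (fun k _ => hg0 k)
                  (Finset.mem_erase.mpr ⟨hj, Finset.mem_univ _⟩)
            _ = t := hgs
      · simp only [Set.mem_setOf_eq]
        rw [← hgs]
        exact Finset.sum_congr rfl fun j hj => if_neg (Finset.ne_of_mem_erase hj)
      · exact Finset.sum_congr rfl fun j hj =>
          congrArg (B j) (if_neg (Finset.ne_of_mem_erase hj))
    · rintro ⟨g, hg, rfl⟩
      exact ⟨g, fun j => (hg.1 j (Set.mem_univ j)).1, hg.2, rfl⟩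
  have himg : IsCompact (F '' K) := hKc.image_of_continuousOn hFc
  have hne : (F '' K).Nonempty := hKne.image F
  have hBval : Bhat N B i t = sInf (F '' K) := by rw [Bhat, hSeq]
  constructor
  · have hmem : sInf (F '' K) ∈ F '' K := himg.sInf_mem hne
    obtain ⟨h, hhK, hFh⟩ := hmem
    exact ⟨h, fun j => (hhK.1 j (Set.mem_univ j)).1, hhK.2, by rw [hBval]; exact hFh⟩
  · intro g hg0 hgs
    have : F g ∈ F '' K := by
      rw [← hSeq]; exact ⟨g, hg0, hgs, rfl⟩
    rw [hBval]
    exact csInf_le himg.bddBelow this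

/-- The replicating pricing function `B_i(t) = B_î(Rs) − B_î(Rs − t)` is a
best response: (a) it induces the allocation `f̃` to relay `i`, and (b) no other pricing
function can yield relay `i` a larger profit. -/
theorem replicating_best_response
    (N : ℕ) (hN : 2 ≤ N) (Rs : ℝ) (hRs : 0 < Rs) (i : Fin N)
    (B : Fin N → ℝ → ℝ) (lam : ℝ → ℝ)
    (hBcont : ∀ j, j ≠ i → ContinuousOn (B j) (Set.Icc 0 Rs))
    (hB0 : ∀ j, j ≠ i → B j 0 = 0)
    (hlam : ContinuousOn lam (Set.Icc 0 Rs))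
    (ftilde : ℝ) (hft : ftilde ∈ Set.Icc 0 Rs)
    (hmax : ∀ t ∈ Set.Icc (0:ℝ) Rs,
      (Bhat N B i Rs - Bhat N B i (Rs - t)) - (∫ r in (0:ℝ)..t, lam r) ≤
      (Bhat N B i Rs - Bhat N B i (Rs - ftilde)) - ∫ r in (0:ℝ)..ftilde, lam r) :
    -- (a) the allocation giving `f̃` to `i` and an optimal split of the rest minimizes
    -- the source's total cost under the replicating pricing function for `i`
    (∃ g : Fin N → ℝ, g i = ftilde ∧ (∀ j, 0 ≤ g j) ∧ (∑ j, g j) = Rs ∧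
      (∑ j ∈ Finset.univ.erase i, B j (g j)) = Bhat N B i (Rs - ftilde) ∧
      ∀ g' : Fin N → ℝ, (∀ j, 0 ≤ g' j) → (∑ j, g' j) = Rs →
        (Bhat N B i Rs - Bhat N B i (Rs - g i)) + (∑ j ∈ Finset.univ.erase i, B j (g j)) ≤
        (Bhat N B i Rs - Bhat N B i (Rs - g' i)) + ∑ j ∈ Finset.univ.erase i, B j (g' j)) ∧
    -- (b) the replicating response is a best response
    (∀ B' : ℝ → ℝ, ContinuousOn B' (Set.Icc 0 Rs) → B' 0 = 0 →
      ∀ g : Fin N → ℝ, (∀ j, 0 ≤ g j) → (∑ j, g j) = Rs →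
        (∀ g' : Fin N → ℝ, (∀ j, 0 ≤ g' j) → (∑ j, g' j) = Rs →
          B' (g i) + (∑ j ∈ Finset.univ.erase i, B j (g j)) ≤
          B' (g' i) + ∑ j ∈ Finset.univ.erase i, B j (g' j)) →
        B' (g i) - (∫ r in (0:ℝ)..(g i), lam r) ≤
        (Bhat N B i Rs - Bhat N B i (Rs - ftilde)) - ∫ r in (0:ℝ)..ftilde, lam r) := by
  classical
  have key := fun {t} (ht : t ∈ Set.Icc (0:ℝ) Rs) => bhat_key N hN Rs i B hBcont ht
  have hRsIcc : Rs ∈ Set.Icc (0:ℝ) Rs := ⟨le_of_lt hRs, le_refl _⟩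
  have hftIcc : (Rs - ftilde) ∈ Set.Icc (0:ℝ) Rs := ⟨by linarith [hft.2], by linarith [hft.1]⟩
  constructor
  · -- part (a)
    obtain ⟨⟨h, hh0, hhs, hhv⟩, hlb⟩ := key hftIcc
    refine ⟨Function.update h i ftilde, Function.update_self i ftilde h, ?_, ?_, ?_, ?_⟩
    · intro j
      by_cases hj : j = i
      · subst hj; rw [Function.update_self]; exact hft.1
      · rw [Function.update_of_ne hj]; exact hh0 j
    · rw [← Finset.add_sum_erase _ _ (Finset.mem_univ i), Function.update_self]
      rw [Finset.sum_congr rfl fun j hj =>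
        Function.update_of_ne (Finset.ne_of_mem_erase hj) ftilde h, hhs]
      ring
    · rw [Finset.sum_congr rfl fun j hj =>
        congrArg (B j) (Function.update_of_ne (Finset.ne_of_mem_erase hj) _ _)]
      exact hhv
    · intro g' hg'0 hg's
      have hupd : ∀ j ∈ Finset.univ.erase i,
          B j (Function.update h i ftilde j) = B j (h j) := fun j hj =>
        congrArg (B j) (Function.update_of_ne (Finset.ne_of_mem_erase hj) _ _)
      rw [Finset.sum_congr rfl hupd, Function.update_self, hhv]
      have hg'i : g' i ∈ Set.Icc (0:ℝ) Rs := by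
        refine ⟨hg'0 i, ?_⟩
        rw [← hg's]
        exact Finset.single_le_sum (fun k _ => hg'0 k) (Finset.mem_univ i)
      have hg'erase : ∑ j ∈ Finset.univ.erase i, g' j = Rs - g' i := by
        have := Finset.add_sum_erase Finset.univ g' (Finset.mem_univ i)
        rw [hg's] at this; linarith
      have hIcc : (Rs - g' i) ∈ Set.Icc (0:ℝ) Rs := ⟨by linarith [hg'i.2], by linarith [hg'i.1]⟩
      have := (key hIcc).2 g' hg'0 hg'erase
      linarith
  · -- part (b)
    intro B' hB'c hB'0 g hg0 hgs hmin
    have hgi : g i ∈ Set.Icc (0:ℝ) Rs := by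
      refine ⟨hg0 i, ?_⟩
      rw [← hgs]
      exact Finset.single_le_sum (fun k _ => hg0 k) (Finset.mem_univ i)
    have hgerase : ∑ j ∈ Finset.univ.erase i, g j = Rs - g i := by
      have := Finset.add_sum_erase Finset.univ g (Finset.mem_univ i)
      rw [hgs] at this; linarith
    have hIcc : (Rs - g i) ∈ Set.Icc (0:ℝ) Rs := ⟨by linarith [hgi.2], by linarith [hgi.1]⟩
    -- lower bound: sum over others ≥ Bhat (Rs - g i)
    have hlb := (key hIcc).2 g hg0 hgerase
    -- build competitor: g0 with g0 i = 0 achieving Bhat Rs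
    obtain ⟨⟨h0, hh00, hh0s, hh0v⟩, _⟩ := key hRsIcc
    have hg00 : ∀ j, 0 ≤ Function.update h0 i 0 j := by
      intro j
      by_cases hj : j = i
      · subst hj; rw [Function.update_self]
      · rw [Function.update_of_ne hj]; exact hh00 j
    have hg0s : ∑ j, Function.update h0 i 0 j = Rs := by
      rw [← Finset.add_sum_erase _ _ (Finset.mem_univ i), Function.update_self]
      rw [Finset.sum_congr rfl fun j hj =>
        Function.update_of_ne (Finset.ne_of_mem_erase hj) 0 h0, hh0s]
      ring
    have hg0sum : ∑ j ∈ Finset.univ.erase i, B j (Function.update h0 i 0 j)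
        = Bhat N B i Rs := by
      rw [Finset.sum_congr rfl fun j hj =>
        congrArg (B j) (Function.update_of_ne (Finset.ne_of_mem_erase hj) _ _)]
      exact hh0v
    have hcomp := hmin _ hg00 hg0s
    rw [Function.update_self, hB'0, hg0sum] at hcomp
    -- so B' (g i) ≤ Bhat Rs - Bhat (Rs - g i)
    have hkey : B' (g i) ≤ Bhat N B i Rs - Bhat N B i (Rs - g i) := by linarith
    have hmx := hmax (g i) hgi
    linarith
end

section
/- Let N ≥ 1, R_s > 0, and let λ_i : [0,R_s] → ℝ be continuous and strictly increasing for i = 1,…,N. Then the cost ∑_i ∫_0^{r_i} λ_i(r) dr has a unique minimizer (r_i^*) over the simplex {(r_i) : r_i ≥ 0, ∑_i r_i = R_s}; moreover, a feasible (r_i) is this minimizer if and only if for all indices i, j: r_i > 0 implies λ_i(r_i) ≤ λ_j(r_j). -/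
open Finset MeasureTheory intervalIntegral Set Filter Topology

section Aux

variable {Rs : ℝ} {lam : ℝ → ℝ}

lemma aux_intg (hc : ContinuousOn lam (Set.Icc 0 Rs)) {a b : ℝ}
    (ha : a ∈ Set.Icc 0 Rs) (hb : b ∈ Set.Icc 0 Rs) :
    IntervalIntegrable lam volume a b :=
  (hc.mono (Set.uIcc_subset_Icc ha hb)).intervalIntegrable

/-- lower bound: (y - x) * lam x ≤ ∫ x..y -/
lemma aux_lb (hc : ContinuousOn lam (Set.Icc 0 Rs))
    (hm : MonotoneOn lam (Set.Icc 0 Rs)) {x y : ℝ}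
    (hx : x ∈ Set.Icc 0 Rs) (hy : y ∈ Set.Icc 0 Rs) :
    (y - x) * lam x ≤ ∫ r in x..y, lam r := by
  rcases le_total x y with h | h
  · have := intervalIntegral.integral_mono_on (μ := volume) (f := fun _ => lam x) (g := lam) h
      intervalIntegrable_const (aux_intg hc hx hy)
      (fun t ht => hm hx (Set.mem_of_mem_of_subset ht (Set.Icc_subset_Icc hx.1 hy.2)) ht.1)
    simpa using this
  · have := intervalIntegral.integral_mono_on (μ := volume) (f := lam) (g := fun _ => lam x) h
      (aux_intg hc hy hx) intervalIntegrable_const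
      (fun t ht => hm (Set.mem_of_mem_of_subset ht (Set.Icc_subset_Icc hy.1 hx.2)) hx ht.2)
    rw [intervalIntegral.integral_symm]
    simp only [intervalIntegral.integral_const, smul_eq_mul] at this ⊢
    nlinarith
  
/-- upper bound for x ≤ y -/
lemma aux_ub (hc : ContinuousOn lam (Set.Icc 0 Rs))
    (hm : MonotoneOn lam (Set.Icc 0 Rs)) {x y : ℝ} (hxy : x ≤ y)
    (hx : x ∈ Set.Icc 0 Rs) (hy : y ∈ Set.Icc 0 Rs) :
    (∫ r in x..y, lam r) ≤ (y - x) * lam y := by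
  have := intervalIntegral.integral_mono_on (μ := volume) (f := lam) (g := fun _ => lam y) hxy
    (aux_intg hc hx hy) intervalIntegrable_const
    (fun t ht => hm (Set.mem_of_mem_of_subset ht (Set.Icc_subset_Icc hx.1 hy.2)) hy ht.2)
  simpa using this

end Aux

section Main

variable {N : ℕ} {Rs : ℝ} {lam : Fin N → ℝ → ℝ}

lemma routing_mem_Icc (hRs : 0 ≤ Rs) {f : Fin N → ℝ} (hf : IsRouting N Rs f) (i : Fin N) :
    f i ∈ Set.Icc 0 Rs := by
  refine ⟨hf.1 i, ?_⟩
  calc f i ≤ ∑ j, f j := Finset.single_le_sum (fun j _ => hf.1 j) (Finset.mem_univ i)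
    _ = Rs := hf.2

lemma cost_diff (hRs : 0 ≤ Rs) (hcont : ∀ i, ContinuousOn (lam i) (Set.Icc 0 Rs))
    {f g : Fin N → ℝ} (hf : IsRouting N Rs f) (hg : IsRouting N Rs g) :
    totalCost N lam g - totalCost N lam f = ∑ i, ∫ r in (f i)..(g i), lam i r := by
  unfold totalCost
  rw [← Finset.sum_sub_distrib]
  refine Finset.sum_congr rfl fun i _ => ?_
  exact intervalIntegral.integral_interval_sub_left
    (aux_intg (hcont i) ⟨le_rfl, hRs⟩ (routing_mem_Icc hRs hg i))
    (aux_intg (hcont i) ⟨le_rfl, hRs⟩ (routing_mem_Icc hRs hf i))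

/-- condition implies optimality -/
lemma opt_of_cond (hN : 1 ≤ N) (hRs : 0 ≤ Rs)
    (hcont : ∀ i, ContinuousOn (lam i) (Set.Icc 0 Rs))
    (hmono : ∀ i, StrictMonoOn (lam i) (Set.Icc 0 Rs))
    {f : Fin N → ℝ} (hf : IsRouting N Rs f)
    (hcond : ∀ i j, 0 < f i → lam i (f i) ≤ lam j (f j)) :
    ∀ g, IsRouting N Rs g → totalCost N lam f ≤ totalCost N lam g := by
  intro g hg
  obtain ⟨i0, -, hi0⟩ := Finset.exists_min_image Finset.univ (fun i => lam i (f i))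
    ⟨⟨0, hN⟩, Finset.mem_univ _⟩
  set c := lam i0 (f i0) with hc
  have key : ∀ i, (g i - f i) * c ≤ ∫ r in (f i)..(g i), lam i r := by
    intro i
    have hlb := aux_lb (hcont i) ((hmono i).monotoneOn)
      (routing_mem_Icc hRs hf i) (routing_mem_Icc hRs hg i)
    refine le_trans ?_ hlb
    rcases eq_or_lt_of_le (hf.1 i) with h0 | h0
    · have : c ≤ lam i (f i) := hi0 i (Finset.mem_univ i)
      have hgi : 0 ≤ g i - f i := by rw [← h0]; simpa [← h0] using hg.1 i
      nlinarith
    · have h1 : lam i (f i) ≤ c := hcond i i0 h0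
      have h2 : c ≤ lam i (f i) := hi0 i (Finset.mem_univ i)
      rw [le_antisymm h1 h2]
  have hsum : 0 ≤ ∑ i, ∫ r in (f i)..(g i), lam i r := by
    calc (0:ℝ) = ∑ i, (g i - f i) * c := by
          rw [← Finset.sum_mul, Finset.sum_sub_distrib, hf.2, hg.2, sub_self, zero_mul]
      _ ≤ _ := Finset.sum_le_sum fun i _ => key i
  have := cost_diff hRs hcont hf hg
  linarith

/-- optimality implies the condition -/
lemma cond_of_opt (hRs : 0 < Rs)
    (hcont : ∀ i, ContinuousOn (lam i) (Set.Icc 0 Rs))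
    (hmono : ∀ i, StrictMonoOn (lam i) (Set.Icc 0 Rs))
    {f : Fin N → ℝ} (hf : IsRouting N Rs f)
    (hopt : ∀ g, IsRouting N Rs g → totalCost N lam f ≤ totalCost N lam g) :
    ∀ i j, 0 < f i → lam i (f i) ≤ lam j (f j) := by
  intro i j hfi
  rcases eq_or_ne i j with rfl | hij
  · exact le_rfl
  have hfi_mem := routing_mem_Icc hRs.le hf i
  have hfj_mem := routing_mem_Icc hRs.le hf j
  have hij_sum : f i + f j ≤ Rs := by
    have h1 : f i + f j = ∑ k ∈ ({i, j} : Finset (Fin N)), f k := (Finset.sum_pair hij).symm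
    rw [h1, ← hf.2]
    exact Finset.sum_le_sum_of_subset_of_nonneg (Finset.subset_univ _)
      (fun k _ _ => hf.1 k)
  have key : ∀ ε ∈ Set.Ioc 0 (f i), lam i (f i - ε) ≤ lam j (f j + ε) := by
    intro ε hε
    obtain ⟨hε0, hεfi⟩ := hε
    have hgi_mem : f i - ε ∈ Set.Icc 0 Rs := ⟨by linarith, by linarith [hfi_mem.2]⟩
    have hgj_mem : f j + ε ∈ Set.Icc 0 Rs := ⟨by linarith [hf.1 j], by linarith⟩
    set g : Fin N → ℝ := fun k => f k + (if k = j then ε else 0) - (if k = i then ε else 0)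
      with hg_def
    have hgj : g j = f j + ε := by simp [hg_def, Ne.symm hij]
    have hgi : g i = f i - ε := by simp [hg_def, hij]
    have hgk : ∀ k, k ≠ i → k ≠ j → g k = f k := by
      intro k hki hkj; simp [hg_def, hki, hkj]
    have hg_routing : IsRouting N Rs g := by
      constructor
      · intro k
        rcases eq_or_ne k i with rfl | hki
        · rw [hgi]; linarith
        rcases eq_or_ne k j with rfl | hkj
        · rw [hgj]; linarith [hf.1 k]
        · rw [hgk k hki hkj]; exact hf.1 k
      · simp [hg_def, Finset.sum_add_distrib, Finset.sum_sub_distrib, hf.2]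
    have hdiff := cost_diff hRs.le hcont hf hg_routing
    have hsum : (∑ k, ∫ r in (f k)..(g k), lam k r)
        = (∫ r in (f i)..(g i), lam i r) + (∫ r in (f j)..(g j), lam j r) := by
      have h1 : ∑ k ∈ ({i, j} : Finset (Fin N)), (fun k => ∫ r in (f k)..(g k), lam k r) k
          = ∑ k, (fun k => ∫ r in (f k)..(g k), lam k r) k := by
        refine Finset.sum_subset (Finset.subset_univ _) ?_
        intro k _ hk
        simp only [Finset.mem_insert, Finset.mem_singleton, not_or] at hk
        simp only [hgk k hk.1 hk.2, intervalIntegral.integral_same]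
      rw [← h1, Finset.sum_pair hij]
    have h0le : 0 ≤ totalCost N lam g - totalCost N lam f :=
      sub_nonneg.2 (hopt g hg_routing)
    have hI : (∫ r in (f i)..(g i), lam i r) = -∫ r in (f i - ε)..(f i), lam i r := by
      rw [hgi, intervalIntegral.integral_symm]
    have hlbi : ε * lam i (f i - ε) ≤ ∫ r in (f i - ε)..(f i), lam i r := by
      have := aux_lb (hcont i) ((hmono i).monotoneOn) hgi_mem hfi_mem
      simpa using this
    have hubj : (∫ r in (f j)..(g j), lam j r) ≤ ε * lam j (f j + ε) := by
      rw [hgj]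
      have := aux_ub (hcont j) ((hmono j).monotoneOn) (by linarith : f j ≤ f j + ε)
        hfj_mem hgj_mem
      simpa using this
    have : ε * lam i (f i - ε) ≤ ε * lam j (f j + ε) := by
      rw [hdiff, hsum, hI] at h0le; linarith
    exact le_of_mul_le_mul_left (by linarith) hε0
  -- pass to the limit ε → 0⁺
  have hne : (𝓝[Set.Ioc 0 (f i)] (0:ℝ)).NeBot := by
    rw [← mem_closure_iff_nhdsWithin_neBot, closure_Ioc hfi.ne]
    exact ⟨le_rfl, hfi.le⟩
  have t1 : Tendsto (fun ε => lam i (f i - ε)) (𝓝[Set.Ioc 0 (f i)] 0) (𝓝 (lam i (f i))) := by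
    refine ((hcont i).continuousWithinAt hfi_mem).tendsto.comp ?_
    rw [tendsto_nhdsWithin_iff]
    constructor
    · have : Tendsto (fun ε : ℝ => f i - ε) (𝓝 0) (𝓝 (f i - 0)) :=
        (continuous_const.sub continuous_id).tendsto 0
      simpa using this.mono_left nhdsWithin_le_nhds
    · filter_upwards [eventually_mem_nhdsWithin] with ε hε
      exact ⟨by linarith [hε.1, hε.2], by linarith [hε.1, hfi_mem.2]⟩
  have t2 : Tendsto (fun ε => lam j (f j + ε)) (𝓝[Set.Ioc 0 (f i)] 0) (𝓝 (lam j (f j))) := by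
    refine ((hcont j).continuousWithinAt hfj_mem).tendsto.comp ?_
    rw [tendsto_nhdsWithin_iff]
    constructor
    · have : Tendsto (fun ε : ℝ => f j + ε) (𝓝 0) (𝓝 (f j + 0)) :=
        (continuous_const.add continuous_id).tendsto 0
      simpa using this.mono_left nhdsWithin_le_nhds
    · filter_upwards [eventually_mem_nhdsWithin] with ε hε
      exact ⟨by linarith [hf.1 j, hε.1], by linarith [hε.2, hij_sum]⟩
  exact le_of_tendsto_of_tendsto t1 t2
    (by filter_upwards [eventually_mem_nhdsWithin] with ε hε using key ε hε)


lemma exists_lt_of_sum_eq {a b : Fin N → ℝ} (h : ∑ i, a i = ∑ i, b i) (hne : a ≠ b) :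
    ∃ i, a i < b i := by
  by_contra h'
  push_neg at h'
  apply hne
  funext i
  by_contra hi
  have : ∑ k, b k < ∑ k, a k :=
    Finset.sum_lt_sum (fun k _ => h' k) ⟨i, Finset.mem_univ i, lt_of_le_of_ne (h' i) (Ne.symm hi)⟩
  linarith

lemma exists_min (hN : 1 ≤ N) (hRs : 0 < Rs)
    (hcont : ∀ i, ContinuousOn (lam i) (Set.Icc 0 Rs)) :
    ∃ ropt, IsRouting N Rs ropt ∧
      ∀ g, IsRouting N Rs g → totalCost N lam ropt ≤ totalCost N lam g := by
  set S : Set (Fin N → ℝ) := {f | IsRouting N Rs f} with hS_def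
  have hS_sub : S ⊆ Set.Icc (fun _ => 0) (fun _ => Rs) := by
    intro f hf
    constructor <;> intro i
    · exact (routing_mem_Icc hRs.le hf i).1
    · exact (routing_mem_Icc hRs.le hf i).2
  have hclosed : IsClosed S := by
    have : S = (⋂ i, {f : Fin N → ℝ | 0 ≤ f i}) ∩ {f : Fin N → ℝ | ∑ i, f i = Rs} := by
      ext f
      simp [hS_def, IsRouting, Set.mem_iInter]
    rw [this]
    exact IsClosed.inter (isClosed_iInter fun i =>
        isClosed_le continuous_const (continuous_apply i))
      (isClosed_eq (continuous_finset_sum _ fun i _ => continuous_apply i) continuous_const)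
  have hcompact : IsCompact S := IsCompact.of_isClosed_subset isCompact_Icc hclosed hS_sub
  have hne : S.Nonempty := by
    refine ⟨fun _ => Rs / N, fun i => by positivity, ?_⟩
    have hN0 : (N : ℝ) ≠ 0 := Nat.cast_ne_zero.2 (by omega)
    simp [Finset.sum_const, Finset.card_univ]
    field_simp
  have hcost_cont : ContinuousOn (totalCost N lam) S := by
    unfold totalCost
    apply continuousOn_finset_sum
    intro i _
    have hprim : ContinuousOn (fun x => ∫ r in (0:ℝ)..x, lam i r) (Set.Icc 0 Rs) := by
      have h1 : Set.uIcc (0:ℝ) Rs = Set.Icc 0 Rs := Set.uIcc_of_le hRs.le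
      rw [← h1]
      exact intervalIntegral.continuousOn_primitive_interval'
        (aux_intg (hcont i) (Set.left_mem_Icc.2 hRs.le) (Set.right_mem_Icc.2 hRs.le))
        (by rw [h1]; exact Set.left_mem_Icc.2 hRs.le)
    exact hprim.comp (continuous_apply i).continuousOn
      (fun f hf => routing_mem_Icc hRs.le hf i)
  obtain ⟨ropt, hmem, hmin⟩ := hcompact.exists_isMinOn hne hcost_cont
  exact ⟨ropt, hmem, fun g hg => isMinOn_iff.mp hmin g hg⟩

end Main

/-- The social-cost minimization over the routing simplex has a unique
minimizer, and a routing is optimal iff every relay with positive flow has minimal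
marginal cost. -/
theorem social_optimum_unique_characterization
    (N : ℕ) (hN : 1 ≤ N) (Rs : ℝ) (hRs : 0 < Rs) (lam : Fin N → ℝ → ℝ)
    (hcont : ∀ i, ContinuousOn (lam i) (Set.Icc 0 Rs))
    (hmono : ∀ i, StrictMonoOn (lam i) (Set.Icc 0 Rs)) :
    (∃! ropt : Fin N → ℝ, IsRouting N Rs ropt ∧
      ∀ g, IsRouting N Rs g → totalCost N lam ropt ≤ totalCost N lam g) ∧
    (∀ f, IsRouting N Rs f →
      ((∀ g, IsRouting N Rs g → totalCost N lam f ≤ totalCost N lam g) ↔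
        (∀ i j, 0 < f i → lam i (f i) ≤ lam j (f j)))) := by
  have uniq : ∀ x y : Fin N → ℝ,
      (IsRouting N Rs x ∧ ∀ g, IsRouting N Rs g → totalCost N lam x ≤ totalCost N lam g) →
      (IsRouting N Rs y ∧ ∀ g, IsRouting N Rs g → totalCost N lam y ≤ totalCost N lam g) →
      x = y := by
    intro x y ⟨hx, hxopt⟩ ⟨hy, hyopt⟩
    have hcx := cond_of_opt hRs hcont hmono hx hxopt
    have hcy := cond_of_opt hRs hcont hmono hy hyopt
    by_contra hne
    obtain ⟨i, hi⟩ := exists_lt_of_sum_eq (hx.2.trans hy.2.symm) hne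
    obtain ⟨j, hj⟩ := exists_lt_of_sum_eq (hy.2.trans hx.2.symm) (Ne.symm hne)
    -- x i < y i, y j < x j
    have hyi : 0 < y i := lt_of_le_of_lt (hx.1 i) hi
    have hxj : 0 < x j := lt_of_le_of_lt (hy.1 j) hj
    have h1 : lam i (y i) ≤ lam j (y j) := hcy i j hyi
    have h2 : lam j (y j) < lam j (x j) :=
      (hmono j) (routing_mem_Icc hRs.le hy j) (routing_mem_Icc hRs.le hx j) hj
    have h3 : lam j (x j) ≤ lam i (x i) := hcx j i hxj
    have h4 : lam i (x i) < lam i (y i) :=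
      (hmono i) (routing_mem_Icc hRs.le hx i) (routing_mem_Icc hRs.le hy i) hi
    linarith
  constructor
  · obtain ⟨ropt, hmem, hmin⟩ := exists_min hN hRs hcont
    exact ⟨ropt, ⟨hmem, hmin⟩, fun y hy => uniq y ropt hy ⟨hmem, hmin⟩⟩
  · intro f hf
    exact ⟨fun hopt => cond_of_opt hRs hcont hmono hf hopt,
      fun hc => opt_of_cond hN hRs.le hcont hmono hf hc⟩
end
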